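/- arXiv:2411.09445 — 8 statements merged into one kernel-verified Lean document; each statement's English description precedes it below -/
import Mathlib

section
/- Let t be an integer such that q = t − 2 is a prime power. Then for every positive integer r and every integer n ≥ r there exists a family F of r-element subsets of [n] such that F is D_r(2,t)-free, F is D_r(t−2,t)-free, and |F| ≥ (∏_{k=1}^{∞} (1 − q^{−k}))·C(n,r), where C(n,r) denotes the binomial coefficient. -/
/-!
Choose vectors `v₁, …, vₙ ∈ 𝔽_q^r` and let `F` consist of the `r`-sets on which `v` is linearly
independent. For a uniformly random `v`, a fixed `r`-set is independent with probability
`∏_{k=1}^r (1 - q^{-k})`, so some `v` gives `|F|` at least this fraction of `C(n,r)`.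

A `D_r(s, q+2)`-daisy `(S, T)` inside `F` gives, after quotienting by the span of `v(S)`,
`q + 2` vectors in an `s`-dimensional space any `s` of which are independent. For `s = 2` these
are `q + 2` distinct points of the projective line, which has only `q + 1` points. For `s = q`,
write two of them in the basis formed by `q` others: the ratios of their coordinates are `q`
pairwise distinct nonzero scalars, but there are only `q - 1` of those.
-/

/-- `F` is `D_r(s,t)`-free. -/
def IsDaisyFree {α : Type*} [DecidableEq α] (r s t : ℕ) (F : Finset (Finset α)) : Prop :=
  ¬ ∃ S T : Finset α, S.card = r - s ∧ T.card = t ∧ Disjoint S T ∧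
      ∀ X ⊆ T, X.card = s → S ∪ X ∈ F

open Finset Module

theorem tprod_le_prod_of_nonneg_of_le_one {ι : Type*} {f : ι → ℝ} (h0 : ∀ i, 0 ≤ f i)
    (h1 : ∀ i, f i ≤ 1) (s : Finset ι) : ∏' i, f i ≤ ∏ i ∈ s, f i := by
  have hbdd : BddBelow (Set.range fun s : Finset ι ↦ ∏ i ∈ s, f i) :=
    ⟨0, by rintro _ ⟨s, rfl⟩; exact prod_nonneg fun i _ ↦ h0 i⟩
  have hf : HasProd f (⨅ s : Finset ι, ∏ i ∈ s, f i) :=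
    tendsto_atTop_ciInf (prod_anti_set_of_le_one h0 h1) hbdd
  rw [hf.tprod_eq]
  exact ciInf_le hbdd s

section GeneralPosition

variable (K : Type*) {W ι : Type*} [DivisionRing K] [AddCommGroup W] [Module K W]

def GeneralPositionOn (w : ι → W) (s : ℕ) (T : Finset ι) : Prop :=
  ∀ X ⊆ T, #X = s → LinearIndepOn K w (X : Set ι)

variable {K} {w : ι → W} {s : ℕ} {T : Finset ι}

theorem mem_span_image_of_repr_eq_zero {B : Finset ι} (e : Basis (B : Set ι) K W)
    (he : ∀ m, e m = w m) {R : Finset ι} {x : W}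
    (hx : ∀ m : (B : Set ι), (m : ι) ∉ R → e.repr x m = 0) :
    x ∈ Submodule.span K (w '' R) := by
  rw [← e.sum_repr x]
  refine Submodule.sum_mem _ fun m _ ↦ ?_
  by_cases hm : (m : ι) ∈ R
  · exact Submodule.smul_mem _ _ (Submodule.subset_span ⟨m, hm, (he m).symm⟩)
  · simp [hx m hm]

namespace GeneralPositionOn

theorem linearIndepOn_pair (h : GeneralPositionOn K w 2 T) {i j : ι} (hi : i ∈ T) (hj : j ∈ T)
    (hij : i ≠ j) : LinearIndepOn K w {i, j} := by
  classical
  simpa using h {i, j} (by simp [insert_subset_iff, hi, hj]) (card_pair hij)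

theorem card_le_of_finrank_eq_two [Finite K] (h : GeneralPositionOn K w 2 T)
    (hW : finrank K W = 2) : #T ≤ Nat.card K + 1 := by
  rcases le_or_gt #T 1 with hT | hT
  · omega
  have hne : ∀ i : T, w i ≠ 0 := fun i ↦ by
    obtain ⟨j, hj, hji⟩ := exists_mem_ne hT i
    exact (h.linearIndepOn_pair i.2 hj (Ne.symm hji)).ne_zero (by simp)
  have hinj : Function.Injective fun i : T ↦ Projectivization.mk K (w i) (hne i) := by
    intro i j hij
    by_contra hne'
    obtain ⟨a, ha⟩ := (Projectivization.mk_eq_mk_iff K _ _ (hne i) (hne j)).1 hij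
    exact (linearIndepOn_pair_iff w (Subtype.coe_ne_coe.2 (Ne.symm hne')) (hne j)).1
      (h.linearIndepOn_pair j.2 i.2 (Subtype.coe_ne_coe.2 (Ne.symm hne'))) a ha
  have : Module.Finite K W := Module.finite_of_finrank_eq_succ hW
  have : Finite W := Module.finite_of_finite K
  calc #T = Nat.card T := (Nat.card_eq_finsetCard T).symm
    _ ≤ Nat.card (Projectivization K W) := Nat.card_le_card_of_injective _ hinj
    _ = Nat.card K + 1 := Projectivization.card_of_finrank_two K W hW

variable {B : Finset ι} (e : Basis (B : Set ι) K W)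

theorem repr_ne_zero (h : GeneralPositionOn K w s T) (he : ∀ m, e m = w m) (hBT : B ⊆ T)
    (hB : #B = s) {x : ι} (hx : x ∈ T) (hxB : x ∉ B) (k : (B : Set ι)) :
    e.repr (w x) k ≠ 0 := by
  classical
  intro h0
  have hxk : x ∉ B.erase k := fun h' ↦ hxB (mem_of_mem_erase h')
  have hli := h (insert x (B.erase k)) (insert_subset hx ((erase_subset _ _).trans hBT)) (by
    have := card_pos.2 ⟨_, k.2⟩
    rw [card_insert_of_notMem hxk, card_erase_of_mem k.2]
    omega)
  rw [coe_insert, linearIndepOn_insert (mt mem_coe.1 hxk)] at hli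
  refine hli.2 (mem_span_image_of_repr_eq_zero e he fun m hm ↦ ?_)
  obtain rfl : m = k := Subtype.ext (by by_contra hmk; exact hm (mem_erase.2 ⟨hmk, m.2⟩))
  exact h0

theorem injective_repr_mul_inv (h : GeneralPositionOn K w s T) (he : ∀ m, e m = w m)
    (hBT : B ⊆ T) (hB : #B = s) {i j : ι} (hi : i ∈ T) (hj : j ∈ T) (hiB : i ∉ B)
    (hjB : j ∉ B) (hij : i ≠ j) :
    Function.Injective fun k ↦ e.repr (w j) k * (e.repr (w i) k)⁻¹ := by
  classical
  intro k l hkl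
  by_contra hkl'
  set c := e.repr (w j) k * (e.repr (w i) k)⁻¹
  set R := (B.erase k).erase l
  have hRB : R ⊆ B := (erase_subset _ _).trans (erase_subset _ _)
  have hiR : i ∉ R := fun h' ↦ hiB (hRB h')
  have hjR : j ∉ insert i R := by
    simpa [not_or, Ne.symm hij] using fun h' ↦ hjB (hRB h')
  have hli := h (insert j (insert i R))
    (insert_subset hj (insert_subset hi (hRB.trans hBT))) (by
      have : 2 ≤ #B := one_lt_card.2 ⟨k, k.2, l, l.2, fun h' ↦ hkl' (Subtype.ext h')⟩
      rw [card_insert_of_notMem hjR, card_insert_of_notMem hiR,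
        card_erase_of_mem (mem_erase.2 ⟨fun h' ↦ hkl' (Subtype.ext h'.symm), l.2⟩),
        card_erase_of_mem k.2]
      omega)
  rw [coe_insert, linearIndepOn_insert (mt mem_coe.1 hjR)] at hli
  have hcoord : ∀ m : (B : Set ι), (m : ι) ∉ R → e.repr (w j - c • w i) m = 0 := by
    intro m hm
    have hm' : m = k ∨ m = l := by
      by_contra! hne
      exact hm (mem_erase.2 ⟨fun h' ↦ hne.2 (Subtype.ext h'),
        mem_erase.2 ⟨fun h' ↦ hne.1 (Subtype.ext h'), m.2⟩⟩)
    have hc : c = e.repr (w j) m * (e.repr (w i) m)⁻¹ := by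
      rcases hm' with rfl | rfl <;> simp [c, hkl]
    simp [hc, h.repr_ne_zero e he hBT hB hi hiB m]
  refine hli.2 ?_
  rw [show w j = c • w i + (w j - c • w i) by abel]
  refine add_mem (Submodule.smul_mem _ _ (Submodule.subset_span (by simp))) ?_
  exact Submodule.span_mono (Set.image_mono (by simp)) (mem_span_image_of_repr_eq_zero e he hcoord)

theorem finrank_lt_card [Fintype K] [Module.Finite K W] (h : GeneralPositionOn K w s T)
    (hW : finrank K W = s) (hT : s + 2 ≤ #T) : s < Fintype.card K := by
  classical
  obtain ⟨i, hi⟩ : T.Nonempty := card_pos.1 (by omega)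
  obtain ⟨j, hj, hji⟩ := exists_mem_ne (s := T) (by omega) i
  obtain ⟨B, hBij, hB⟩ := exists_subset_card_eq (s := (T.erase i).erase j) (n := s) (by
    rw [card_erase_of_mem (mem_erase.2 ⟨hji, hj⟩), card_erase_of_mem hi]
    omega)
  have hBT : B ⊆ T := hBij.trans ((erase_subset _ _).trans (erase_subset _ _))
  have hiB : i ∉ B := fun h' ↦ by simpa using (mem_erase.1 (hBij h')).2
  have hjB : j ∉ B := fun h' ↦ by simpa using hBij h'
  let e : Basis (B : Set ι) K W :=
    basisOfLinearIndependentOfCardEqFinrank' _ (h B hBT hB) (by simp [hB, hW])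
  have he : ∀ m, e m = w m := fun m ↦ by simp [e]
  let ρ : ↥(B : Set ι) → Kˣ := fun k ↦ Units.mk0 (e.repr (w j) k * (e.repr (w i) k)⁻¹)
    (mul_ne_zero (h.repr_ne_zero e he hBT hB hj hjB k)
      (inv_ne_zero (h.repr_ne_zero e he hBT hB hi hiB k)))
  have hρ : Function.Injective ρ := fun k l hkl ↦
    h.injective_repr_mul_inv e he hBT hB hi hj hiB hjB (Ne.symm hji) (Units.ext_iff.1 hkl)
  have := Fintype.card_le_of_injective ρ hρ
  simp only [Fintype.card_units, coe_sort_coe, Fintype.card_coe, hB] at this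
  have := Fintype.card_pos (α := K)
  omega

end GeneralPositionOn

end GeneralPosition

section Daisy

variable (K : Type*) {V α : Type*} [DivisionRing K] [AddCommGroup V] [Module K V] [Fintype α]

open Classical in
noncomputable def linearIndepSets (v : α → V) (r : ℕ) : Finset (Finset α) :=
  {A ∈ powersetCard r univ | LinearIndepOn K v (A : Set α)}

variable {K} {v : α → V} {r s t : ℕ}

theorem mem_linearIndepSets {A : Finset α} :
    A ∈ linearIndepSets K v r ↔ #A = r ∧ LinearIndepOn K v (A : Set α) := by
  simp [linearIndepSets]

variable [DecidableEq α] [Module.Finite K V]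

theorem exists_generalPositionOn_of_not_isDaisyFree (hV : finrank K V = r) (hst : s ≤ t)
    (h : ¬ IsDaisyFree r s t (linearIndepSets K v r)) :
    ∃ (U : Submodule K V) (T : Finset α),
      #T = t ∧ finrank K (V ⧸ U) = s ∧ GeneralPositionOn K (U.mkQ ∘ v) s T := by
  obtain ⟨S, T, hS, hT, hST, hF⟩ := not_not.1 h
  have hliSX : ∀ X ⊆ T, #X = s → LinearIndepOn K v (S ∪ X : Set α) := fun X hXT hX ↦ by
    simpa using (mem_linearIndepSets.1 (hF X hXT hX)).2
  obtain ⟨X₀, hX₀T, hX₀⟩ := exists_subset_card_eq (hT ▸ hst)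
  have hsr : s ≤ r := by
    have := (mem_linearIndepSets.1 (hF X₀ hX₀T hX₀)).1
    rw [card_union_of_disjoint (hST.mono_right hX₀T)] at this
    omega
  refine ⟨Submodule.span K (v '' S), T, hT, ?_, fun X hXT hX ↦ ?_⟩
  · have hspan := finrank_span_eq_card ((hliSX X₀ hX₀T hX₀).mono Set.subset_union_left)
    rw [← Set.image_eq_range] at hspan
    simp only [coe_sort_coe, Fintype.card_coe, hS] at hspan
    have := (Submodule.span K (v '' S)).finrank_quotient_add_finrank
    omega
  · exact ((linearIndepOn_union_iff_quotient
      (disjoint_coe.2 (hST.mono_right hXT))).1 (hliSX X hXT hX)).2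

variable [Fintype K]

theorem isDaisyFree_linearIndepSets_two (hV : finrank K V = r) :
    IsDaisyFree r 2 (Fintype.card K + 2) (linearIndepSets K v r) := by
  by_contra h
  obtain ⟨U, T, hT, hU, hgp⟩ := exists_generalPositionOn_of_not_isDaisyFree hV (by omega) h
  have := hgp.card_le_of_finrank_eq_two hU
  rw [Nat.card_eq_fintype_card] at this
  omega

theorem isDaisyFree_linearIndepSets_card (hV : finrank K V = r) :
    IsDaisyFree r (Fintype.card K) (Fintype.card K + 2) (linearIndepSets K v r) := by
  by_contra h
  obtain ⟨U, T, hT, hU, hgp⟩ := exists_generalPositionOn_of_not_isDaisyFree hV (by omega) h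
  exact (hgp.finrank_lt_card hU hT.ge).false

end Daisy

section Counting

theorem card_preimage_restrict_mul {α β : Type*} (s : Set α) (P : (s → β) → Prop) :
    Nat.card {f : α → β // P fun a : s ↦ f a} * Nat.card (s → β) =
      Nat.card {g : s → β // P g} * Nat.card (α → β) := by
  classical
  let e := Equiv.piEquivPiSubtypeProd (· ∈ s) fun _ ↦ β
  have hP : {f : α → β // P fun a : s ↦ f a} ≃ {g : s → β // P g} × ({a // a ∉ s} → β) :=
    (e.subtypeEquiv (q := fun g ↦ P g.1) fun _ ↦ Iff.rfl).trans
      (Equiv.prodSubtypeFstEquivSubtypeProd (p := P))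
  rw [Nat.card_congr hP, Nat.card_congr e, Nat.card_prod, Nat.card_prod]
  ring

theorem prod_range_pow_sub_pow {q : ℝ} (hq : q ≠ 0) (r : ℕ) :
    ∏ i ∈ range r, (q ^ r - q ^ i) = (∏ k ∈ range r, (1 - q⁻¹ ^ (k + 1))) * (q ^ r) ^ r := by
  rw [← prod_range_reflect, show (q ^ r) ^ r = ∏ _k ∈ range r, q ^ r by simp,
    ← prod_mul_distrib]
  refine prod_congr rfl fun k hk ↦ ?_
  rw [sub_mul, one_mul, inv_pow]
  congr 1
  rw [eq_inv_mul_iff_mul_eq₀ (pow_ne_zero _ hq), ← pow_add]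
  congr 1
  have := mem_range.1 hk
  omega

variable {K V α : Type*} [DivisionRing K] [Fintype K] [AddCommGroup V] [Module K V] [Fintype V]

theorem card_linearIndepOn {A : Finset α} (hA : #A = finrank K V) :
    (Nat.card {v : α → V // LinearIndepOn K v A} : ℝ) =
      (∏ k ∈ range (finrank K V), (1 - (Fintype.card K : ℝ)⁻¹ ^ (k + 1))) *
        Nat.card (α → V) := by
  set r := finrank K V
  set q := Fintype.card K
  have hq : (q : ℝ) ≠ 0 := by positivity
  have hrestrict : Nat.card {v : α → V // LinearIndepOn K v A} * Nat.card (↥(A : Set α) → V) =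
      Nat.card {g : ↥(A : Set α) → V // LinearIndependent K g} * Nat.card (α → V) :=
    card_preimage_restrict_mul (A : Set α) fun g : ↥(A : Set α) → V ↦ LinearIndependent K g
  let eA : Fin r ≃ ↥(A : Set α) := (A.equivFin.trans (finCongr hA)).symm
  have hLI : Nat.card {g : ↥(A : Set α) → V // LinearIndependent K g} =
      ∏ i : Fin r, (q ^ r - q ^ (i : ℕ)) := by
    rw [← card_linearIndependent le_rfl]
    exact Nat.card_congr ((eA.arrowCongr (Equiv.refl V)).subtypeEquiv
      fun g ↦ (linearIndependent_equiv eA.symm).symm).symm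
  have hAV : Nat.card (↥(A : Set α) → V) = (q ^ r) ^ r := by
    rw [Nat.card_fun, Nat.card_eq_fintype_card, Module.card_eq_pow_finrank (K := K),
      ← Nat.card_congr eA, Nat.card_fin]
  have hcast : ∏ i : Fin r, ((q ^ r - q ^ (i : ℕ) : ℕ) : ℝ) =
      ∏ i ∈ range r, ((q : ℝ) ^ r - q ^ i) := by
    rw [Fin.prod_univ_eq_prod_range (fun i ↦ ((q ^ r - q ^ i : ℕ) : ℝ))]
    refine prod_congr rfl fun i hi ↦ ?_
    rw [Nat.cast_sub (Nat.pow_le_pow_right Fintype.card_pos (mem_range.1 hi).le)]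
    push_cast
    rfl
  rw [hLI, hAV] at hrestrict
  have := congrArg (Nat.cast : ℕ → ℝ) hrestrict
  push_cast at this
  rw [hcast, prod_range_pow_sub_pow hq] at this
  refine mul_right_cancel₀ (pow_ne_zero r (pow_ne_zero r hq)) ?_
  linear_combination this

variable (K V α) [Fintype α]

theorem exists_le_card_linearIndepSets :
    ∃ v : α → V, (∏ k ∈ range (finrank K V), (1 - (Fintype.card K : ℝ)⁻¹ ^ (k + 1))) *
      (Fintype.card α).choose (finrank K V) ≤ #(linearIndepSets K v (finrank K V)) := by
  classical
  set r := finrank K V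
  set P := ∏ k ∈ range r, (1 - (Fintype.card K : ℝ)⁻¹ ^ (k + 1))
  let indep (v : α → V) (A : Finset α) : Prop := LinearIndepOn K v A
  have hswap := sum_card_bipartiteAbove_eq_sum_card_bipartiteBelow indep (s := univ)
    (t := powersetCard r univ)
  have hA : ∀ A ∈ powersetCard r univ,
      (#(univ.bipartiteBelow indep A) : ℝ) = P * Nat.card (α → V) := fun A hA ↦ by
    rw [bipartiteBelow, ← Fintype.card_subtype, ← Nat.card_eq_fintype_card]
    exact card_linearIndepOn (mem_powersetCard_univ.1 hA)
  have hcount : ∑ v : α → V, (#(linearIndepSets K v r) : ℝ) =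
      ∑ _v : α → V, P * (Fintype.card α).choose r := by
    rw [sum_const, card_univ, ← Nat.card_eq_fintype_card, nsmul_eq_mul]
    calc ∑ v : α → V, (#(linearIndepSets K v r) : ℝ)
        = ∑ A ∈ powersetCard r univ, (#(univ.bipartiteBelow indep A) : ℝ) := by
          exact_mod_cast hswap
      _ = _ := by
          rw [sum_congr rfl hA, sum_const, card_powersetCard, card_univ, nsmul_eq_mul]
          ring
  obtain ⟨v, -, hv⟩ := exists_le_of_sum_le univ_nonempty hcount.ge
  exact ⟨v, hv⟩

end Counting

theorem daisy_free_dense_family_general (q t : ℕ) (hq : IsPrimePow q) (ht : t = q + 2)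
    (r n : ℕ) :
    ∃ F : Finset (Finset (Fin n)),
      (∀ A ∈ F, A.card = r) ∧
      IsDaisyFree r 2 t F ∧
      IsDaisyFree r (t - 2) t F ∧
      (∏' k : ℕ, (1 - ((q : ℝ))⁻¹ ^ (k + 1))) * (n.choose r : ℝ) ≤ (F.card : ℝ) := by
  have hq1 : 1 < q := hq.one_lt
  obtain ⟨p, k, hp, hk, hpk⟩ := hq
  have := Fact.mk hp.nat_prime
  let K := GaloisField p k
  let _ : Fintype K := Fintype.ofFinite K
  have hK : Fintype.card K = q := by
    rw [← Nat.card_eq_fintype_card, GaloisField.card p k hk.ne', hpk]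
  have hV : finrank K (Fin r → K) = r := finrank_fin_fun K
  obtain ⟨v, hv⟩ := exists_le_card_linearIndepSets K (Fin r → K) (Fin n)
  rw [hV, Fintype.card_fin, hK] at hv
  subst ht
  refine ⟨linearIndepSets K v r, fun A hA ↦ (mem_linearIndepSets.1 hA).1, ?_, ?_, ?_⟩
  · rw [← hK]
    exact isDaisyFree_linearIndepSets_two hV
  · rw [Nat.add_sub_cancel, ← hK]
    exact isDaisyFree_linearIndepSets_card hV
  · have hinv : ∀ k : ℕ, (q : ℝ)⁻¹ ^ (k + 1) ≤ 1 := fun k ↦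
      pow_le_one₀ (by positivity) (inv_le_one_of_one_le₀ (by exact_mod_cast hq1.le))
    refine le_trans ?_ hv
    gcongr
    exact tprod_le_prod_of_nonneg_of_le_one (fun k ↦ sub_nonneg.2 (hinv k))
      (fun k ↦ sub_le_self _ (by positivity)) _

/-- If `q = t - 2` is a prime power, then for every `r ≥ 1` and `n ≥ r` there is a family `F`
of `r`-element subsets of `[n]` that is `D_r(2,t)`-free and `D_r(t-2,t)`-free, with
`|F| ≥ (∏_{k=1}^∞ (1 - q^{-k})) · C(n,r)`. -/
theorem daisy_free_dense_family (q t : ℕ) (hq : IsPrimePow q) (ht : t = q + 2)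
    (r n : ℕ) (hr : 1 ≤ r) (hn : r ≤ n) :
    ∃ F : Finset (Finset (Fin n)),
      (∀ A ∈ F, A.card = r) ∧
      IsDaisyFree r 2 t F ∧
      IsDaisyFree r (t - 2) t F ∧
      (∏' k : ℕ, (1 - ((q : ℝ))⁻¹ ^ (k + 1))) * (n.choose r : ℝ) ≤ (F.card : ℝ) :=
  daisy_free_dense_family_general q t hq ht r n
end

section
/- Let v_1, v_2, …, v_7 be seven vectors in F_5^4, the 4-dimensional vector space over the field with 5 elements. Then there exist four pairwise distinct indices i, j, k, l ∈ {1,…,7} such that v_i, v_j, v_k, v_l do not form a basis of F_5^4 (equivalently, v_i, v_j, v_k, v_l are linearly dependent). -/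
set_option maxRecDepth 40000 in
set_option synthInstance.maxSize 2000 in
set_option synthInstance.maxHeartbeats 1000000 in
set_option maxHeartbeats 2000000 in
private lemma arc7 : ∀ u1 u2 u3 w1 w2 w3 : ZMod 5,
    u1 ≠ 0 → u2 ≠ 0 → u3 ≠ 0 → w1 ≠ 0 → w2 ≠ 0 → w3 ≠ 0 →
    u1 ≠ 1 → u2 ≠ 1 → u3 ≠ 1 → u1 ≠ u2 → u1 ≠ u3 → u2 ≠ u3 →
    w1 ≠ 1 → w2 ≠ 1 → w3 ≠ 1 → w1 ≠ w2 → w1 ≠ w3 → w2 ≠ w3 →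
    w1 ≠ u1 → w2 ≠ u2 → w3 ≠ u3 →
    u1 * w2 ≠ u2 * w1 → u1 * w3 ≠ u3 * w1 → u2 * w3 ≠ u3 * w2 →
    (u1 * w2 - u2 * w1) - (w2 - w1) + (u2 - u1) ≠ 0 →
    (u1 * w3 - u3 * w1) - (w3 - w1) + (u3 - u1) ≠ 0 →
    (u2 * w3 - u3 * w2) - (w3 - w2) + (u3 - u2) ≠ 0 →
    (u2 * w3 - u3 * w2) - (u1 * w3 - u3 * w1) + (u1 * w2 - u2 * w1) ≠ 0 →
    False := by decide

set_option maxHeartbeats 4000000 in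
/-- Among any seven vectors in `F_5^4`, some four of them (with pairwise distinct indices)
do not form a basis, i.e. are linearly dependent. -/
theorem seven_vectors_F5_fourth (v : Fin 7 → Fin 4 → ZMod 5) :
    ∃ i j k l : Fin 7, i ≠ j ∧ i ≠ k ∧ i ≠ l ∧ j ≠ k ∧ j ≠ l ∧ k ≠ l ∧
      ¬ LinearIndependent (ZMod 5) ![v i, v j, v k, v l] := by
  haveI : Fact (Nat.Prime 5) := ⟨by norm_num⟩
  by_contra hcon
  push_neg at hcon
  have H : ∀ i j k l : Fin 7, i ≠ j → i ≠ k → i ≠ l → j ≠ k → j ≠ l → k ≠ l →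
      LinearIndependent (ZMod 5) ![v i, v j, v k, v l] := hcon
  have key : ∀ i j k l : Fin 7, i ≠ j → i ≠ k → i ≠ l → j ≠ k → j ≠ l → k ≠ l →
      ∀ g0 g1 g2 g3 : ZMod 5,
      (∀ x, g0 * v i x + g1 * v j x + g2 * v k x + g3 * v l x = 0) →
      g0 = 0 ∧ g1 = 0 ∧ g2 = 0 ∧ g3 = 0 := by
    intro i j k l h1 h2 h3 h4 h5 h6 g0 g1 g2 g3 hg
    have hli := Fintype.linearIndependent_iff.mp (H i j k l h1 h2 h3 h4 h5 h6)
        ![g0, g1, g2, g3] ?_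
    · exact ⟨by simpa using hli 0, by simpa using hli 1, by simpa using hli 2,
        by simpa using hli 3⟩
    · rw [Fin.sum_univ_four]
      funext x
      simpa using hg x
  have hli4 : LinearIndependent (ZMod 5) ![v 0, v 1, v 2, v 3] :=
    H 0 1 2 3 (by decide) (by decide) (by decide) (by decide) (by decide) (by decide)
  have hcard : Fintype.card (Fin 4) = Module.finrank (ZMod 5) (Fin 4 → ZMod 5) := by
    simp only [Fintype.card_fin]
    exact (Module.finrank_fin_fun (ZMod 5)).symm
  let B := basisOfLinearIndependentOfCardEqFinrank hli4 hcard
  have hB : ⇑B = ![v 0, v 1, v 2, v 3] :=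
    coe_basisOfLinearIndependentOfCardEqFinrank hli4 hcard
  set a : Fin 4 → ZMod 5 := fun j => B.repr (v 4) j with hadef
  have hv4 : ∀ x, v 4 x = a 0 * v 0 x + a 1 * v 1 x + a 2 * v 2 x + a 3 * v 3 x := by
    intro x
    have h := congrFun (B.sum_repr (v 4)) x
    rw [Fin.sum_univ_four] at h
    simp only [hB, Pi.add_apply, Pi.smul_apply, smul_eq_mul, Matrix.cons_val_zero,
      Matrix.cons_val_one, Matrix.head_cons, Matrix.cons_val_two, Matrix.tail_cons,
      Matrix.cons_val_three] at h
    rw [← h, hadef]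
  set b : Fin 4 → ZMod 5 := fun j => B.repr (v 5) j with hbdef
  have hv5 : ∀ x, v 5 x = b 0 * v 0 x + b 1 * v 1 x + b 2 * v 2 x + b 3 * v 3 x := by
    intro x
    have h := congrFun (B.sum_repr (v 5)) x
    rw [Fin.sum_univ_four] at h
    simp only [hB, Pi.add_apply, Pi.smul_apply, smul_eq_mul, Matrix.cons_val_zero,
      Matrix.cons_val_one, Matrix.head_cons, Matrix.cons_val_two, Matrix.tail_cons,
      Matrix.cons_val_three] at h
    rw [← h, hbdef]
  set c : Fin 4 → ZMod 5 := fun j => B.repr (v 6) j with hcdef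
  have hv6 : ∀ x, v 6 x = c 0 * v 0 x + c 1 * v 1 x + c 2 * v 2 x + c 3 * v 3 x := by
    intro x
    have h := congrFun (B.sum_repr (v 6)) x
    rw [Fin.sum_univ_four] at h
    simp only [hB, Pi.add_apply, Pi.smul_apply, smul_eq_mul, Matrix.cons_val_zero,
      Matrix.cons_val_one, Matrix.head_cons, Matrix.cons_val_two, Matrix.tail_cons,
      Matrix.cons_val_three] at h
    rw [← h, hcdef]
  have hA0 : a 0 ≠ 0 := fun h => one_ne_zero (neg_eq_zero.mp
    ((key 1 2 3 4 (by decide) (by decide) (by decide) (by decide) (by decide) (by decide) (a 1) (a 2) (a 3) (-1)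
      (fun x => by linear_combination (-1 : ZMod 5) * hv4 x - v 0 x * h)).2.2.2))
  have hA1 : a 1 ≠ 0 := fun h => one_ne_zero (neg_eq_zero.mp
    ((key 0 2 3 4 (by decide) (by decide) (by decide) (by decide) (by decide) (by decide) (a 0) (a 2) (a 3) (-1)
      (fun x => by linear_combination (-1 : ZMod 5) * hv4 x - v 1 x * h)).2.2.2))
  have hA2 : a 2 ≠ 0 := fun h => one_ne_zero (neg_eq_zero.mp
    ((key 0 1 3 4 (by decide) (by decide) (by decide) (by decide) (by decide) (by decide) (a 0) (a 1) (a 3) (-1)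
      (fun x => by linear_combination (-1 : ZMod 5) * hv4 x - v 2 x * h)).2.2.2))
  have hA3 : a 3 ≠ 0 := fun h => one_ne_zero (neg_eq_zero.mp
    ((key 0 1 2 4 (by decide) (by decide) (by decide) (by decide) (by decide) (by decide) (a 0) (a 1) (a 2) (-1)
      (fun x => by linear_combination (-1 : ZMod 5) * hv4 x - v 3 x * h)).2.2.2))
  have hB0 : b 0 ≠ 0 := fun h => one_ne_zero (neg_eq_zero.mp
    ((key 1 2 3 5 (by decide) (by decide) (by decide) (by decide) (by decide) (by decide) (b 1) (b 2) (b 3) (-1)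
      (fun x => by linear_combination (-1 : ZMod 5) * hv5 x - v 0 x * h)).2.2.2))
  have hB1 : b 1 ≠ 0 := fun h => one_ne_zero (neg_eq_zero.mp
    ((key 0 2 3 5 (by decide) (by decide) (by decide) (by decide) (by decide) (by decide) (b 0) (b 2) (b 3) (-1)
      (fun x => by linear_combination (-1 : ZMod 5) * hv5 x - v 1 x * h)).2.2.2))
  have hB2 : b 2 ≠ 0 := fun h => one_ne_zero (neg_eq_zero.mp
    ((key 0 1 3 5 (by decide) (by decide) (by decide) (by decide) (by decide) (by decide) (b 0) (b 1) (b 3) (-1)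
      (fun x => by linear_combination (-1 : ZMod 5) * hv5 x - v 2 x * h)).2.2.2))
  have hB3 : b 3 ≠ 0 := fun h => one_ne_zero (neg_eq_zero.mp
    ((key 0 1 2 5 (by decide) (by decide) (by decide) (by decide) (by decide) (by decide) (b 0) (b 1) (b 2) (-1)
      (fun x => by linear_combination (-1 : ZMod 5) * hv5 x - v 3 x * h)).2.2.2))
  have hC0 : c 0 ≠ 0 := fun h => one_ne_zero (neg_eq_zero.mp
    ((key 1 2 3 6 (by decide) (by decide) (by decide) (by decide) (by decide) (by decide) (c 1) (c 2) (c 3) (-1)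
      (fun x => by linear_combination (-1 : ZMod 5) * hv6 x - v 0 x * h)).2.2.2))
  have hC1 : c 1 ≠ 0 := fun h => one_ne_zero (neg_eq_zero.mp
    ((key 0 2 3 6 (by decide) (by decide) (by decide) (by decide) (by decide) (by decide) (c 0) (c 2) (c 3) (-1)
      (fun x => by linear_combination (-1 : ZMod 5) * hv6 x - v 1 x * h)).2.2.2))
  have hC2 : c 2 ≠ 0 := fun h => one_ne_zero (neg_eq_zero.mp
    ((key 0 1 3 6 (by decide) (by decide) (by decide) (by decide) (by decide) (by decide) (c 0) (c 1) (c 3) (-1)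
      (fun x => by linear_combination (-1 : ZMod 5) * hv6 x - v 2 x * h)).2.2.2))
  have hC3 : c 3 ≠ 0 := fun h => one_ne_zero (neg_eq_zero.mp
    ((key 0 1 2 6 (by decide) (by decide) (by decide) (by decide) (by decide) (by decide) (c 0) (c 1) (c 2) (-1)
      (fun x => by linear_combination (-1 : ZMod 5) * hv6 x - v 3 x * h)).2.2.2))
  have hAB01 : a 0 * b 1 ≠ a 1 * b 0 := fun h => hA1 (neg_eq_zero.mp
    ((key 2 3 4 5 (by decide) (by decide) (by decide) (by decide) (by decide) (by decide)
      (-(b 1 * a 2 - a 1 * b 2)) (-(b 1 * a 3 - a 1 * b 3)) (b 1) (-(a 1))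
      (fun x => by linear_combination b 1 * hv4 x - a 1 * hv5 x + v 0 x * h)).2.2.2))
  have hAB02 : a 0 * b 2 ≠ a 2 * b 0 := fun h => hA2 (neg_eq_zero.mp
    ((key 1 3 4 5 (by decide) (by decide) (by decide) (by decide) (by decide) (by decide)
      (-(b 2 * a 1 - a 2 * b 1)) (-(b 2 * a 3 - a 2 * b 3)) (b 2) (-(a 2))
      (fun x => by linear_combination b 2 * hv4 x - a 2 * hv5 x + v 0 x * h)).2.2.2))
  have hAB03 : a 0 * b 3 ≠ a 3 * b 0 := fun h => hA3 (neg_eq_zero.mp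
    ((key 1 2 4 5 (by decide) (by decide) (by decide) (by decide) (by decide) (by decide)
      (-(b 3 * a 1 - a 3 * b 1)) (-(b 3 * a 2 - a 3 * b 2)) (b 3) (-(a 3))
      (fun x => by linear_combination b 3 * hv4 x - a 3 * hv5 x + v 0 x * h)).2.2.2))
  have hAB12 : a 1 * b 2 ≠ a 2 * b 1 := fun h => hA2 (neg_eq_zero.mp
    ((key 0 3 4 5 (by decide) (by decide) (by decide) (by decide) (by decide) (by decide)
      (-(b 2 * a 0 - a 2 * b 0)) (-(b 2 * a 3 - a 2 * b 3)) (b 2) (-(a 2))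
      (fun x => by linear_combination b 2 * hv4 x - a 2 * hv5 x + v 1 x * h)).2.2.2))
  have hAB13 : a 1 * b 3 ≠ a 3 * b 1 := fun h => hA3 (neg_eq_zero.mp
    ((key 0 2 4 5 (by decide) (by decide) (by decide) (by decide) (by decide) (by decide)
      (-(b 3 * a 0 - a 3 * b 0)) (-(b 3 * a 2 - a 3 * b 2)) (b 3) (-(a 3))
      (fun x => by linear_combination b 3 * hv4 x - a 3 * hv5 x + v 1 x * h)).2.2.2))
  have hAB23 : a 2 * b 3 ≠ a 3 * b 2 := fun h => hA3 (neg_eq_zero.mp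
    ((key 0 1 4 5 (by decide) (by decide) (by decide) (by decide) (by decide) (by decide)
      (-(b 3 * a 0 - a 3 * b 0)) (-(b 3 * a 1 - a 3 * b 1)) (b 3) (-(a 3))
      (fun x => by linear_combination b 3 * hv4 x - a 3 * hv5 x + v 2 x * h)).2.2.2))
  have hAC01 : a 0 * c 1 ≠ a 1 * c 0 := fun h => hA1 (neg_eq_zero.mp
    ((key 2 3 4 6 (by decide) (by decide) (by decide) (by decide) (by decide) (by decide)
      (-(c 1 * a 2 - a 1 * c 2)) (-(c 1 * a 3 - a 1 * c 3)) (c 1) (-(a 1))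
      (fun x => by linear_combination c 1 * hv4 x - a 1 * hv6 x + v 0 x * h)).2.2.2))
  have hAC02 : a 0 * c 2 ≠ a 2 * c 0 := fun h => hA2 (neg_eq_zero.mp
    ((key 1 3 4 6 (by decide) (by decide) (by decide) (by decide) (by decide) (by decide)
      (-(c 2 * a 1 - a 2 * c 1)) (-(c 2 * a 3 - a 2 * c 3)) (c 2) (-(a 2))
      (fun x => by linear_combination c 2 * hv4 x - a 2 * hv6 x + v 0 x * h)).2.2.2))
  have hAC03 : a 0 * c 3 ≠ a 3 * c 0 := fun h => hA3 (neg_eq_zero.mp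
    ((key 1 2 4 6 (by decide) (by decide) (by decide) (by decide) (by decide) (by decide)
      (-(c 3 * a 1 - a 3 * c 1)) (-(c 3 * a 2 - a 3 * c 2)) (c 3) (-(a 3))
      (fun x => by linear_combination c 3 * hv4 x - a 3 * hv6 x + v 0 x * h)).2.2.2))
  have hAC12 : a 1 * c 2 ≠ a 2 * c 1 := fun h => hA2 (neg_eq_zero.mp
    ((key 0 3 4 6 (by decide) (by decide) (by decide) (by decide) (by decide) (by decide)
      (-(c 2 * a 0 - a 2 * c 0)) (-(c 2 * a 3 - a 2 * c 3)) (c 2) (-(a 2))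
      (fun x => by linear_combination c 2 * hv4 x - a 2 * hv6 x + v 1 x * h)).2.2.2))
  have hAC13 : a 1 * c 3 ≠ a 3 * c 1 := fun h => hA3 (neg_eq_zero.mp
    ((key 0 2 4 6 (by decide) (by decide) (by decide) (by decide) (by decide) (by decide)
      (-(c 3 * a 0 - a 3 * c 0)) (-(c 3 * a 2 - a 3 * c 2)) (c 3) (-(a 3))
      (fun x => by linear_combination c 3 * hv4 x - a 3 * hv6 x + v 1 x * h)).2.2.2))
  have hAC23 : a 2 * c 3 ≠ a 3 * c 2 := fun h => hA3 (neg_eq_zero.mp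
    ((key 0 1 4 6 (by decide) (by decide) (by decide) (by decide) (by decide) (by decide)
      (-(c 3 * a 0 - a 3 * c 0)) (-(c 3 * a 1 - a 3 * c 1)) (c 3) (-(a 3))
      (fun x => by linear_combination c 3 * hv4 x - a 3 * hv6 x + v 2 x * h)).2.2.2))
  have hBC01 : b 0 * c 1 ≠ b 1 * c 0 := fun h => hB1 (neg_eq_zero.mp
    ((key 2 3 5 6 (by decide) (by decide) (by decide) (by decide) (by decide) (by decide)
      (-(c 1 * b 2 - b 1 * c 2)) (-(c 1 * b 3 - b 1 * c 3)) (c 1) (-(b 1))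
      (fun x => by linear_combination c 1 * hv5 x - b 1 * hv6 x + v 0 x * h)).2.2.2))
  have hBC02 : b 0 * c 2 ≠ b 2 * c 0 := fun h => hB2 (neg_eq_zero.mp
    ((key 1 3 5 6 (by decide) (by decide) (by decide) (by decide) (by decide) (by decide)
      (-(c 2 * b 1 - b 2 * c 1)) (-(c 2 * b 3 - b 2 * c 3)) (c 2) (-(b 2))
      (fun x => by linear_combination c 2 * hv5 x - b 2 * hv6 x + v 0 x * h)).2.2.2))
  have hBC03 : b 0 * c 3 ≠ b 3 * c 0 := fun h => hB3 (neg_eq_zero.mp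
    ((key 1 2 5 6 (by decide) (by decide) (by decide) (by decide) (by decide) (by decide)
      (-(c 3 * b 1 - b 3 * c 1)) (-(c 3 * b 2 - b 3 * c 2)) (c 3) (-(b 3))
      (fun x => by linear_combination c 3 * hv5 x - b 3 * hv6 x + v 0 x * h)).2.2.2))
  have hBC12 : b 1 * c 2 ≠ b 2 * c 1 := fun h => hB2 (neg_eq_zero.mp
    ((key 0 3 5 6 (by decide) (by decide) (by decide) (by decide) (by decide) (by decide)
      (-(c 2 * b 0 - b 2 * c 0)) (-(c 2 * b 3 - b 2 * c 3)) (c 2) (-(b 2))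
      (fun x => by linear_combination c 2 * hv5 x - b 2 * hv6 x + v 1 x * h)).2.2.2))
  have hBC13 : b 1 * c 3 ≠ b 3 * c 1 := fun h => hB3 (neg_eq_zero.mp
    ((key 0 2 5 6 (by decide) (by decide) (by decide) (by decide) (by decide) (by decide)
      (-(c 3 * b 0 - b 3 * c 0)) (-(c 3 * b 2 - b 3 * c 2)) (c 3) (-(b 3))
      (fun x => by linear_combination c 3 * hv5 x - b 3 * hv6 x + v 1 x * h)).2.2.2))
  have hBC23 : b 2 * c 3 ≠ b 3 * c 2 := fun h => hB3 (neg_eq_zero.mp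
    ((key 0 1 5 6 (by decide) (by decide) (by decide) (by decide) (by decide) (by decide)
      (-(c 3 * b 0 - b 3 * c 0)) (-(c 3 * b 1 - b 3 * c 1)) (c 3) (-(b 3))
      (fun x => by linear_combination c 3 * hv5 x - b 3 * hv6 x + v 2 x * h)).2.2.2))
  have hM0 : a 1 * (b 2 * c 3 - b 3 * c 2) - a 2 * (b 1 * c 3 - b 3 * c 1) + a 3 * (b 1 * c 2 - b 2 * c 1) ≠ 0 := fun h => (sub_ne_zero_of_ne hAB12)
    ((key 0 4 5 6 (by decide) (by decide) (by decide) (by decide) (by decide) (by decide)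
      (-((b 1 * c 2 - b 2 * c 1) * a 0 + (c 1 * a 2 - c 2 * a 1) * b 0 + (a 1 * b 2 - a 2 * b 1) * c 0)) (b 1 * c 2 - b 2 * c 1) (c 1 * a 2 - c 2 * a 1) (a 1 * b 2 - a 2 * b 1)
      (fun x => by linear_combination (b 1 * c 2 - b 2 * c 1) * hv4 x + (c 1 * a 2 - c 2 * a 1) * hv5 x + (a 1 * b 2 - a 2 * b 1) * hv6 x + v 3 x * h)).2.2.2)
  have hM1 : a 0 * (b 2 * c 3 - b 3 * c 2) - a 2 * (b 0 * c 3 - b 3 * c 0) + a 3 * (b 0 * c 2 - b 2 * c 0) ≠ 0 := fun h => (sub_ne_zero_of_ne hAB02)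
    ((key 1 4 5 6 (by decide) (by decide) (by decide) (by decide) (by decide) (by decide)
      (-((b 0 * c 2 - b 2 * c 0) * a 1 + (c 0 * a 2 - c 2 * a 0) * b 1 + (a 0 * b 2 - a 2 * b 0) * c 1)) (b 0 * c 2 - b 2 * c 0) (c 0 * a 2 - c 2 * a 0) (a 0 * b 2 - a 2 * b 0)
      (fun x => by linear_combination (b 0 * c 2 - b 2 * c 0) * hv4 x + (c 0 * a 2 - c 2 * a 0) * hv5 x + (a 0 * b 2 - a 2 * b 0) * hv6 x + v 3 x * h)).2.2.2)
  have hM2 : a 0 * (b 1 * c 3 - b 3 * c 1) - a 1 * (b 0 * c 3 - b 3 * c 0) + a 3 * (b 0 * c 1 - b 1 * c 0) ≠ 0 := fun h => (sub_ne_zero_of_ne hAB01)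
    ((key 2 4 5 6 (by decide) (by decide) (by decide) (by decide) (by decide) (by decide)
      (-((b 0 * c 1 - b 1 * c 0) * a 2 + (c 0 * a 1 - c 1 * a 0) * b 2 + (a 0 * b 1 - a 1 * b 0) * c 2)) (b 0 * c 1 - b 1 * c 0) (c 0 * a 1 - c 1 * a 0) (a 0 * b 1 - a 1 * b 0)
      (fun x => by linear_combination (b 0 * c 1 - b 1 * c 0) * hv4 x + (c 0 * a 1 - c 1 * a 0) * hv5 x + (a 0 * b 1 - a 1 * b 0) * hv6 x + v 3 x * h)).2.2.2)
  have hM3 : a 0 * (b 1 * c 2 - b 2 * c 1) - a 1 * (b 0 * c 2 - b 2 * c 0) + a 2 * (b 0 * c 1 - b 1 * c 0) ≠ 0 := fun h => (sub_ne_zero_of_ne hAB01)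
    ((key 3 4 5 6 (by decide) (by decide) (by decide) (by decide) (by decide) (by decide)
      (-((b 0 * c 1 - b 1 * c 0) * a 3 + (c 0 * a 1 - c 1 * a 0) * b 3 + (a 0 * b 1 - a 1 * b 0) * c 3)) (b 0 * c 1 - b 1 * c 0) (c 0 * a 1 - c 1 * a 0) (a 0 * b 1 - a 1 * b 0)
      (fun x => by linear_combination (b 0 * c 1 - b 1 * c 0) * hv4 x + (c 0 * a 1 - c 1 * a 0) * hv5 x + (a 0 * b 1 - a 1 * b 0) * hv6 x + v 2 x * h)).2.2.2)
  have hU1ne0 : (b 1 * a 0 * (a 1 * b 0)⁻¹) ≠ 0 :=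
    mul_ne_zero (mul_ne_zero hB1 hA0) (inv_ne_zero (mul_ne_zero hA1 hB0))
  have hU2ne0 : (b 2 * a 0 * (a 2 * b 0)⁻¹) ≠ 0 :=
    mul_ne_zero (mul_ne_zero hB2 hA0) (inv_ne_zero (mul_ne_zero hA2 hB0))
  have hU3ne0 : (b 3 * a 0 * (a 3 * b 0)⁻¹) ≠ 0 :=
    mul_ne_zero (mul_ne_zero hB3 hA0) (inv_ne_zero (mul_ne_zero hA3 hB0))
  have hW1ne0 : (c 1 * a 0 * (a 1 * c 0)⁻¹) ≠ 0 :=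
    mul_ne_zero (mul_ne_zero hC1 hA0) (inv_ne_zero (mul_ne_zero hA1 hC0))
  have hW2ne0 : (c 2 * a 0 * (a 2 * c 0)⁻¹) ≠ 0 :=
    mul_ne_zero (mul_ne_zero hC2 hA0) (inv_ne_zero (mul_ne_zero hA2 hC0))
  have hW3ne0 : (c 3 * a 0 * (a 3 * c 0)⁻¹) ≠ 0 :=
    mul_ne_zero (mul_ne_zero hC3 hA0) (inv_ne_zero (mul_ne_zero hA3 hC0))
  have hU1ne1 : (b 1 * a 0 * (a 1 * b 0)⁻¹) ≠ 1 := by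
    intro e
    apply hAB01
    have e2 : ((b 1 * a 0 * (a 1 * b 0)⁻¹) - 1) * (a 1 * b 0) = b 1 * a 0 - a 1 * b 0 := by
      field_simp
    rw [e, sub_self, zero_mul] at e2
    linear_combination -e2
  have hU2ne1 : (b 2 * a 0 * (a 2 * b 0)⁻¹) ≠ 1 := by
    intro e
    apply hAB02
    have e2 : ((b 2 * a 0 * (a 2 * b 0)⁻¹) - 1) * (a 2 * b 0) = b 2 * a 0 - a 2 * b 0 := by
      field_simp
    rw [e, sub_self, zero_mul] at e2
    linear_combination -e2
  have hU3ne1 : (b 3 * a 0 * (a 3 * b 0)⁻¹) ≠ 1 := by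
    intro e
    apply hAB03
    have e2 : ((b 3 * a 0 * (a 3 * b 0)⁻¹) - 1) * (a 3 * b 0) = b 3 * a 0 - a 3 * b 0 := by
      field_simp
    rw [e, sub_self, zero_mul] at e2
    linear_combination -e2
  have hU12ne : (b 1 * a 0 * (a 1 * b 0)⁻¹) ≠ (b 2 * a 0 * (a 2 * b 0)⁻¹) := by
    intro e
    apply hAB12
    have e2 : ((b 1 * a 0 * (a 1 * b 0)⁻¹) - (b 2 * a 0 * (a 2 * b 0)⁻¹)) * (a 1 * a 2 * b 0) = a 0 * (a 2 * b 1 - a 1 * b 2) := by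
      field_simp
    rw [e, sub_self, zero_mul] at e2
    have e3 := (mul_eq_zero.mp e2.symm).resolve_left hA0
    linear_combination -e3
  have hU13ne : (b 1 * a 0 * (a 1 * b 0)⁻¹) ≠ (b 3 * a 0 * (a 3 * b 0)⁻¹) := by
    intro e
    apply hAB13
    have e2 : ((b 1 * a 0 * (a 1 * b 0)⁻¹) - (b 3 * a 0 * (a 3 * b 0)⁻¹)) * (a 1 * a 3 * b 0) = a 0 * (a 3 * b 1 - a 1 * b 3) := by
      field_simp
    rw [e, sub_self, zero_mul] at e2
    have e3 := (mul_eq_zero.mp e2.symm).resolve_left hA0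
    linear_combination -e3
  have hU23ne : (b 2 * a 0 * (a 2 * b 0)⁻¹) ≠ (b 3 * a 0 * (a 3 * b 0)⁻¹) := by
    intro e
    apply hAB23
    have e2 : ((b 2 * a 0 * (a 2 * b 0)⁻¹) - (b 3 * a 0 * (a 3 * b 0)⁻¹)) * (a 2 * a 3 * b 0) = a 0 * (a 3 * b 2 - a 2 * b 3) := by
      field_simp
    rw [e, sub_self, zero_mul] at e2
    have e3 := (mul_eq_zero.mp e2.symm).resolve_left hA0
    linear_combination -e3
  have hW1ne1 : (c 1 * a 0 * (a 1 * c 0)⁻¹) ≠ 1 := by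
    intro e
    apply hAC01
    have e2 : ((c 1 * a 0 * (a 1 * c 0)⁻¹) - 1) * (a 1 * c 0) = c 1 * a 0 - a 1 * c 0 := by
      field_simp
    rw [e, sub_self, zero_mul] at e2
    linear_combination -e2
  have hW2ne1 : (c 2 * a 0 * (a 2 * c 0)⁻¹) ≠ 1 := by
    intro e
    apply hAC02
    have e2 : ((c 2 * a 0 * (a 2 * c 0)⁻¹) - 1) * (a 2 * c 0) = c 2 * a 0 - a 2 * c 0 := by
      field_simp
    rw [e, sub_self, zero_mul] at e2
    linear_combination -e2
  have hW3ne1 : (c 3 * a 0 * (a 3 * c 0)⁻¹) ≠ 1 := by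
    intro e
    apply hAC03
    have e2 : ((c 3 * a 0 * (a 3 * c 0)⁻¹) - 1) * (a 3 * c 0) = c 3 * a 0 - a 3 * c 0 := by
      field_simp
    rw [e, sub_self, zero_mul] at e2
    linear_combination -e2
  have hW12ne : (c 1 * a 0 * (a 1 * c 0)⁻¹) ≠ (c 2 * a 0 * (a 2 * c 0)⁻¹) := by
    intro e
    apply hAC12
    have e2 : ((c 1 * a 0 * (a 1 * c 0)⁻¹) - (c 2 * a 0 * (a 2 * c 0)⁻¹)) * (a 1 * a 2 * c 0) = a 0 * (a 2 * c 1 - a 1 * c 2) := by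
      field_simp
    rw [e, sub_self, zero_mul] at e2
    have e3 := (mul_eq_zero.mp e2.symm).resolve_left hA0
    linear_combination -e3
  have hW13ne : (c 1 * a 0 * (a 1 * c 0)⁻¹) ≠ (c 3 * a 0 * (a 3 * c 0)⁻¹) := by
    intro e
    apply hAC13
    have e2 : ((c 1 * a 0 * (a 1 * c 0)⁻¹) - (c 3 * a 0 * (a 3 * c 0)⁻¹)) * (a 1 * a 3 * c 0) = a 0 * (a 3 * c 1 - a 1 * c 3) := by
      field_simp
    rw [e, sub_self, zero_mul] at e2
    have e3 := (mul_eq_zero.mp e2.symm).resolve_left hA0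
    linear_combination -e3
  have hW23ne : (c 2 * a 0 * (a 2 * c 0)⁻¹) ≠ (c 3 * a 0 * (a 3 * c 0)⁻¹) := by
    intro e
    apply hAC23
    have e2 : ((c 2 * a 0 * (a 2 * c 0)⁻¹) - (c 3 * a 0 * (a 3 * c 0)⁻¹)) * (a 2 * a 3 * c 0) = a 0 * (a 3 * c 2 - a 2 * c 3) := by
      field_simp
    rw [e, sub_self, zero_mul] at e2
    have e3 := (mul_eq_zero.mp e2.symm).resolve_left hA0
    linear_combination -e3
  have hWU1 : (c 1 * a 0 * (a 1 * c 0)⁻¹) ≠ (b 1 * a 0 * (a 1 * b 0)⁻¹) := by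
    intro e
    apply hBC01
    have e2 : ((c 1 * a 0 * (a 1 * c 0)⁻¹) - (b 1 * a 0 * (a 1 * b 0)⁻¹)) * (a 1 * b 0 * c 0) = a 0 * (b 0 * c 1 - b 1 * c 0) := by
      field_simp
    rw [e, sub_self, zero_mul] at e2
    have e3 := (mul_eq_zero.mp e2.symm).resolve_left hA0
    linear_combination e3
  have hWU2 : (c 2 * a 0 * (a 2 * c 0)⁻¹) ≠ (b 2 * a 0 * (a 2 * b 0)⁻¹) := by
    intro e
    apply hBC02
    have e2 : ((c 2 * a 0 * (a 2 * c 0)⁻¹) - (b 2 * a 0 * (a 2 * b 0)⁻¹)) * (a 2 * b 0 * c 0) = a 0 * (b 0 * c 2 - b 2 * c 0) := by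
      field_simp
    rw [e, sub_self, zero_mul] at e2
    have e3 := (mul_eq_zero.mp e2.symm).resolve_left hA0
    linear_combination e3
  have hWU3 : (c 3 * a 0 * (a 3 * c 0)⁻¹) ≠ (b 3 * a 0 * (a 3 * b 0)⁻¹) := by
    intro e
    apply hBC03
    have e2 : ((c 3 * a 0 * (a 3 * c 0)⁻¹) - (b 3 * a 0 * (a 3 * b 0)⁻¹)) * (a 3 * b 0 * c 0) = a 0 * (b 0 * c 3 - b 3 * c 0) := by
      field_simp
    rw [e, sub_self, zero_mul] at e2
    have e3 := (mul_eq_zero.mp e2.symm).resolve_left hA0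
    linear_combination e3
  have hUW12 : (b 1 * a 0 * (a 1 * b 0)⁻¹) * (c 2 * a 0 * (a 2 * c 0)⁻¹) ≠ (b 2 * a 0 * (a 2 * b 0)⁻¹) * (c 1 * a 0 * (a 1 * c 0)⁻¹) := by
    intro e
    apply hBC12
    have e2 : ((b 1 * a 0 * (a 1 * b 0)⁻¹) * (c 2 * a 0 * (a 2 * c 0)⁻¹) - (b 2 * a 0 * (a 2 * b 0)⁻¹) * (c 1 * a 0 * (a 1 * c 0)⁻¹)) * (a 1 * a 2 * b 0 * c 0)
        = a 0 * a 0 * (b 1 * c 2 - b 2 * c 1) := by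
      field_simp
    rw [e, sub_self, zero_mul] at e2
    have e3 := (mul_eq_zero.mp e2.symm).resolve_left (mul_ne_zero hA0 hA0)
    linear_combination e3
  have hUW13 : (b 1 * a 0 * (a 1 * b 0)⁻¹) * (c 3 * a 0 * (a 3 * c 0)⁻¹) ≠ (b 3 * a 0 * (a 3 * b 0)⁻¹) * (c 1 * a 0 * (a 1 * c 0)⁻¹) := by
    intro e
    apply hBC13
    have e2 : ((b 1 * a 0 * (a 1 * b 0)⁻¹) * (c 3 * a 0 * (a 3 * c 0)⁻¹) - (b 3 * a 0 * (a 3 * b 0)⁻¹) * (c 1 * a 0 * (a 1 * c 0)⁻¹)) * (a 1 * a 3 * b 0 * c 0)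
        = a 0 * a 0 * (b 1 * c 3 - b 3 * c 1) := by
      field_simp
    rw [e, sub_self, zero_mul] at e2
    have e3 := (mul_eq_zero.mp e2.symm).resolve_left (mul_ne_zero hA0 hA0)
    linear_combination e3
  have hUW23 : (b 2 * a 0 * (a 2 * b 0)⁻¹) * (c 3 * a 0 * (a 3 * c 0)⁻¹) ≠ (b 3 * a 0 * (a 3 * b 0)⁻¹) * (c 2 * a 0 * (a 2 * c 0)⁻¹) := by
    intro e
    apply hBC23
    have e2 : ((b 2 * a 0 * (a 2 * b 0)⁻¹) * (c 3 * a 0 * (a 3 * c 0)⁻¹) - (b 3 * a 0 * (a 3 * b 0)⁻¹) * (c 2 * a 0 * (a 2 * c 0)⁻¹)) * (a 2 * a 3 * b 0 * c 0)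
        = a 0 * a 0 * (b 2 * c 3 - b 3 * c 2) := by
      field_simp
    rw [e, sub_self, zero_mul] at e2
    have e3 := (mul_eq_zero.mp e2.symm).resolve_left (mul_ne_zero hA0 hA0)
    linear_combination e3
  have hUe1 : (b 1 * a 0 * (a 1 * b 0)⁻¹) * (a 1 * b 0) = b 1 * a 0 :=
    inv_mul_cancel_right₀ (mul_ne_zero hA1 hB0) _
  have hWe1 : (c 1 * a 0 * (a 1 * c 0)⁻¹) * (a 1 * c 0) = c 1 * a 0 :=
    inv_mul_cancel_right₀ (mul_ne_zero hA1 hC0) _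
  have hUe2 : (b 2 * a 0 * (a 2 * b 0)⁻¹) * (a 2 * b 0) = b 2 * a 0 :=
    inv_mul_cancel_right₀ (mul_ne_zero hA2 hB0) _
  have hWe2 : (c 2 * a 0 * (a 2 * c 0)⁻¹) * (a 2 * c 0) = c 2 * a 0 :=
    inv_mul_cancel_right₀ (mul_ne_zero hA2 hC0) _
  have hUe3 : (b 3 * a 0 * (a 3 * b 0)⁻¹) * (a 3 * b 0) = b 3 * a 0 :=
    inv_mul_cancel_right₀ (mul_ne_zero hA3 hB0) _
  have hWe3 : (c 3 * a 0 * (a 3 * c 0)⁻¹) * (a 3 * c 0) = c 3 * a 0 :=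
    inv_mul_cancel_right₀ (mul_ne_zero hA3 hC0) _
  have hD012 : ((b 1 * a 0 * (a 1 * b 0)⁻¹) * (c 2 * a 0 * (a 2 * c 0)⁻¹) - (b 2 * a 0 * (a 2 * b 0)⁻¹) * (c 1 * a 0 * (a 1 * c 0)⁻¹)) - ((c 2 * a 0 * (a 2 * c 0)⁻¹) - (c 1 * a 0 * (a 1 * c 0)⁻¹)) + ((b 2 * a 0 * (a 2 * b 0)⁻¹) - (b 1 * a 0 * (a 1 * b 0)⁻¹)) ≠ 0 := by
    intro e
    apply hM3
    have e2 : (((b 1 * a 0 * (a 1 * b 0)⁻¹) * (c 2 * a 0 * (a 2 * c 0)⁻¹) - (b 2 * a 0 * (a 2 * b 0)⁻¹) * (c 1 * a 0 * (a 1 * c 0)⁻¹)) - ((c 2 * a 0 * (a 2 * c 0)⁻¹) - (c 1 * a 0 * (a 1 * c 0)⁻¹)) + ((b 2 * a 0 * (a 2 * b 0)⁻¹) - (b 1 * a 0 * (a 1 * b 0)⁻¹))) * (a 1 * a 2 * b 0 * c 0)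
        = a 0 * (a 0 * (b 1 * c 2 - b 2 * c 1) - a 1 * (b 0 * c 2 - b 2 * c 0) + a 2 * (b 0 * c 1 - b 1 * c 0)) := by
      linear_combination ((c 2 * a 0 * (a 2 * c 0)⁻¹) * a 2 * c 0 - a 2 * c 0) * hUe1
        + (a 1 * c 0 - (c 1 * a 0 * (a 1 * c 0)⁻¹) * a 1 * c 0) * hUe2
        + (a 0 * b 1 - a 1 * b 0) * hWe2
        + (a 2 * b 0 - a 0 * b 2) * hWe1
    rw [e, zero_mul] at e2
    exact (mul_eq_zero.mp e2.symm).resolve_left hA0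
  have hD013 : ((b 1 * a 0 * (a 1 * b 0)⁻¹) * (c 3 * a 0 * (a 3 * c 0)⁻¹) - (b 3 * a 0 * (a 3 * b 0)⁻¹) * (c 1 * a 0 * (a 1 * c 0)⁻¹)) - ((c 3 * a 0 * (a 3 * c 0)⁻¹) - (c 1 * a 0 * (a 1 * c 0)⁻¹)) + ((b 3 * a 0 * (a 3 * b 0)⁻¹) - (b 1 * a 0 * (a 1 * b 0)⁻¹)) ≠ 0 := by
    intro e
    apply hM2
    have e2 : (((b 1 * a 0 * (a 1 * b 0)⁻¹) * (c 3 * a 0 * (a 3 * c 0)⁻¹) - (b 3 * a 0 * (a 3 * b 0)⁻¹) * (c 1 * a 0 * (a 1 * c 0)⁻¹)) - ((c 3 * a 0 * (a 3 * c 0)⁻¹) - (c 1 * a 0 * (a 1 * c 0)⁻¹)) + ((b 3 * a 0 * (a 3 * b 0)⁻¹) - (b 1 * a 0 * (a 1 * b 0)⁻¹))) * (a 1 * a 3 * b 0 * c 0)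
        = a 0 * (a 0 * (b 1 * c 3 - b 3 * c 1) - a 1 * (b 0 * c 3 - b 3 * c 0) + a 3 * (b 0 * c 1 - b 1 * c 0)) := by
      linear_combination ((c 3 * a 0 * (a 3 * c 0)⁻¹) * a 3 * c 0 - a 3 * c 0) * hUe1
        + (a 1 * c 0 - (c 1 * a 0 * (a 1 * c 0)⁻¹) * a 1 * c 0) * hUe3
        + (a 0 * b 1 - a 1 * b 0) * hWe3
        + (a 3 * b 0 - a 0 * b 3) * hWe1
    rw [e, zero_mul] at e2
    exact (mul_eq_zero.mp e2.symm).resolve_left hA0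
  have hD023 : ((b 2 * a 0 * (a 2 * b 0)⁻¹) * (c 3 * a 0 * (a 3 * c 0)⁻¹) - (b 3 * a 0 * (a 3 * b 0)⁻¹) * (c 2 * a 0 * (a 2 * c 0)⁻¹)) - ((c 3 * a 0 * (a 3 * c 0)⁻¹) - (c 2 * a 0 * (a 2 * c 0)⁻¹)) + ((b 3 * a 0 * (a 3 * b 0)⁻¹) - (b 2 * a 0 * (a 2 * b 0)⁻¹)) ≠ 0 := by
    intro e
    apply hM1
    have e2 : (((b 2 * a 0 * (a 2 * b 0)⁻¹) * (c 3 * a 0 * (a 3 * c 0)⁻¹) - (b 3 * a 0 * (a 3 * b 0)⁻¹) * (c 2 * a 0 * (a 2 * c 0)⁻¹)) - ((c 3 * a 0 * (a 3 * c 0)⁻¹) - (c 2 * a 0 * (a 2 * c 0)⁻¹)) + ((b 3 * a 0 * (a 3 * b 0)⁻¹) - (b 2 * a 0 * (a 2 * b 0)⁻¹))) * (a 2 * a 3 * b 0 * c 0)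
        = a 0 * (a 0 * (b 2 * c 3 - b 3 * c 2) - a 2 * (b 0 * c 3 - b 3 * c 0) + a 3 * (b 0 * c 2 - b 2 * c 0)) := by
      linear_combination ((c 3 * a 0 * (a 3 * c 0)⁻¹) * a 3 * c 0 - a 3 * c 0) * hUe2
        + (a 2 * c 0 - (c 2 * a 0 * (a 2 * c 0)⁻¹) * a 2 * c 0) * hUe3
        + (a 0 * b 2 - a 2 * b 0) * hWe3
        + (a 3 * b 0 - a 0 * b 3) * hWe2
    rw [e, zero_mul] at e2
    exact (mul_eq_zero.mp e2.symm).resolve_left hA0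
  have hD123 : ((b 2 * a 0 * (a 2 * b 0)⁻¹) * (c 3 * a 0 * (a 3 * c 0)⁻¹) - (b 3 * a 0 * (a 3 * b 0)⁻¹) * (c 2 * a 0 * (a 2 * c 0)⁻¹)) - ((b 1 * a 0 * (a 1 * b 0)⁻¹) * (c 3 * a 0 * (a 3 * c 0)⁻¹) - (b 3 * a 0 * (a 3 * b 0)⁻¹) * (c 1 * a 0 * (a 1 * c 0)⁻¹)) + ((b 1 * a 0 * (a 1 * b 0)⁻¹) * (c 2 * a 0 * (a 2 * c 0)⁻¹) - (b 2 * a 0 * (a 2 * b 0)⁻¹) * (c 1 * a 0 * (a 1 * c 0)⁻¹)) ≠ 0 := by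
    intro e
    apply hM0
    have e2 : (((b 2 * a 0 * (a 2 * b 0)⁻¹) * (c 3 * a 0 * (a 3 * c 0)⁻¹) - (b 3 * a 0 * (a 3 * b 0)⁻¹) * (c 2 * a 0 * (a 2 * c 0)⁻¹)) - ((b 1 * a 0 * (a 1 * b 0)⁻¹) * (c 3 * a 0 * (a 3 * c 0)⁻¹) - (b 3 * a 0 * (a 3 * b 0)⁻¹) * (c 1 * a 0 * (a 1 * c 0)⁻¹)) + ((b 1 * a 0 * (a 1 * b 0)⁻¹) * (c 2 * a 0 * (a 2 * c 0)⁻¹) - (b 2 * a 0 * (a 2 * b 0)⁻¹) * (c 1 * a 0 * (a 1 * c 0)⁻¹))) * (a 1 * a 2 * a 3 * b 0 * c 0)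
        = a 0 * a 0 * (a 1 * (b 2 * c 3 - b 3 * c 2) - a 2 * (b 1 * c 3 - b 3 * c 1) + a 3 * (b 1 * c 2 - b 2 * c 1)) := by
      linear_combination (a 1 * (c 3 * a 0 * (a 3 * c 0)⁻¹) * a 3 * c 0) * hUe2
        + (a 1 * a 0 * b 2) * hWe3
        - (a 1 * (c 2 * a 0 * (a 2 * c 0)⁻¹) * a 2 * c 0) * hUe3
        - (a 1 * a 0 * b 3) * hWe2
        - (a 2 * (c 3 * a 0 * (a 3 * c 0)⁻¹) * a 3 * c 0) * hUe1
        - (a 2 * a 0 * b 1) * hWe3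
        + (a 2 * (c 1 * a 0 * (a 1 * c 0)⁻¹) * a 1 * c 0) * hUe3
        + (a 2 * a 0 * b 3) * hWe1
        + (a 3 * (c 2 * a 0 * (a 2 * c 0)⁻¹) * a 2 * c 0) * hUe1
        + (a 3 * a 0 * b 1) * hWe2
        - (a 3 * (c 1 * a 0 * (a 1 * c 0)⁻¹) * a 1 * c 0) * hUe2
        - (a 3 * a 0 * b 2) * hWe1
    rw [e, zero_mul] at e2
    exact (mul_eq_zero.mp e2.symm).resolve_left (mul_ne_zero hA0 hA0)
  exact arc7 (b 1 * a 0 * (a 1 * b 0)⁻¹) (b 2 * a 0 * (a 2 * b 0)⁻¹) (b 3 * a 0 * (a 3 * b 0)⁻¹) (c 1 * a 0 * (a 1 * c 0)⁻¹) (c 2 * a 0 * (a 2 * c 0)⁻¹) (c 3 * a 0 * (a 3 * c 0)⁻¹)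
    hU1ne0 hU2ne0 hU3ne0 hW1ne0 hW2ne0 hW3ne0
    hU1ne1 hU2ne1 hU3ne1 hU12ne hU13ne hU23ne
    hW1ne1 hW2ne1 hW3ne1 hW12ne hW13ne hW23ne
    hWU1 hWU2 hWU3 hUW12 hUW13 hUW23
    hD012 hD013 hD023 hD123
end

section
/- Let F be a finite field with q elements, and let v_1, …, v_{q+2} be q+2 vectors in F^q, the q-dimensional vector space over F. Then there exist q pairwise distinct indices i_1, …, i_q ∈ {1,…,q+2} such that the vectors v_{i_1}, …, v_{i_q} are linearly dependent over F. In other words, it is impossible to have q+2 vectors in F^q of which any q are linearly independent. -/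
/-- Given `q + 2` vectors in `F^q`, where `F` is a finite field with `q` elements,
some `q` of them (with pairwise distinct indices) are linearly dependent: it is impossible
to have `q + 2` vectors in `F^q` of which any `q` are linearly independent. -/
theorem q_dependent_of_card_add_two (F : Type*) [Field F] [Fintype F] (q : ℕ)
    (hq : q = Fintype.card F) (v : Fin (q + 2) → Fin q → F) :
    ∃ g : Fin q → Fin (q + 2), Function.Injective g ∧ ¬ LinearIndependent F (v ∘ g) := by
  by_contra hcon
  push_neg at hcon
  -- Key: no nonzero relation among the `v i` can vanish at two distinct coordinates.
  have key : ∀ c : Fin (q + 2) → F, (∑ i, c i • v i = 0) →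
      ∀ i₁ i₂ : Fin (q + 2), i₁ ≠ i₂ → c i₁ = 0 → c i₂ = 0 → c = 0 := by
    intro c hc i₁ i₂ hne h1 h2
    set s : Finset (Fin (q + 2)) := Finset.univ \ {i₁, i₂} with hs
    have hcard : s.card = q := by
      rw [hs, Finset.card_sdiff_of_subset (by simp)]
      rw [Finset.card_insert_of_notMem (by simp [hne]), Finset.card_singleton]
      simp
    let e := s.orderIsoOfFin hcard
    let g : Fin q → Fin (q + 2) := fun k => (e k : Fin (q + 2))
    have hg : Function.Injective g := fun x y hxy => e.injective (Subtype.ext hxy)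
    have hli := hcon g hg
    rw [Fintype.linearIndependent_iff] at hli
    have hzero : ∀ i ∉ s, c i = 0 := by
      intro i hi
      have : i = i₁ ∨ i = i₂ := by
        by_contra hcontra
        push_neg at hcontra
        exact hi (by simp [hs, hcontra.1, hcontra.2])
      rcases this with h | h <;> simp [h, h1, h2]
    have hsum : ∑ k, (c ∘ g) k • (v ∘ g) k = 0 := by
      have h1' : ∑ k : Fin q, c (g k) • v (g k) = ∑ i ∈ s, c i • v i := by
        rw [← Finset.sum_coe_sort s (fun i => c i • v i)]
        exact Equiv.sum_comp e.toEquiv (fun i : s => c (i : Fin (q + 2)) • v i)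
      have h2' : ∑ i ∈ s, c i • v i = ∑ i, c i • v i := by
        apply Finset.sum_subset (Finset.subset_univ s)
        intro i _ hi
        simp [hzero i hi]
      simpa [Function.comp] using h1'.trans (h2'.trans hc)
    have hz := hli (c ∘ g) hsum
    funext i
    by_cases hi : i ∈ s
    · have hgi : g (e.symm ⟨i, hi⟩) = i := by simp [g]
      simpa [hgi] using hz (e.symm ⟨i, hi⟩)
    · simpa using hzero i hi
  -- the linear map sending coefficients to the linear combination
  let φ : (Fin (q + 2) → F) →ₗ[F] (Fin q → F) :=
    { toFun := fun c => ∑ i, c i • v i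
      map_add' := fun x y => by
        simp [add_smul, Finset.sum_add_distrib]
      map_smul' := fun t x => by
        simp [mul_smul, Finset.smul_sum] }
  have hker2 : 2 ≤ Module.finrank F (LinearMap.ker φ) := by
    have h1 := LinearMap.finrank_range_add_finrank_ker φ
    have h2 : Module.finrank F (LinearMap.range φ) ≤ q := by
      calc Module.finrank F (LinearMap.range φ) ≤ Module.finrank F (Fin q → F) :=
            Submodule.finrank_le _
        _ = q := by simp
    have h3 : Module.finrank F (Fin (q + 2) → F) = q + 2 := by simp
    rw [h3] at h1
    omega
  -- get a nonzero kernel element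
  have hbot : LinearMap.ker φ ≠ ⊥ := by
    intro h
    rw [h] at hker2
    simp at hker2
  obtain ⟨a, haK, ha0⟩ := Submodule.exists_mem_ne_zero_of_ne_bot hbot
  -- get a second kernel element not in the span of the first
  have hnotle : ¬ (LinearMap.ker φ ≤ Submodule.span F {a}) := by
    intro hle
    have := Submodule.finrank_mono hle
    rw [finrank_span_singleton ha0] at this
    omega
  obtain ⟨b, hbK, hb0⟩ := SetLike.not_le_iff_exists.mp hnotle
  have hamem : ∑ i, a i • v i = 0 := LinearMap.mem_ker.mp haK
  have hbmem : ∑ i, b i • v i = 0 := LinearMap.mem_ker.mp hbK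
  -- linear independence of the pair a, b
  have hpair : ∀ s t : F, s • a + t • b = 0 → s = 0 ∧ t = 0 := by
    intro s t h
    by_cases ht : t = 0
    · subst ht
      simp at h
      rcases h with h | h
      · exact ⟨h, rfl⟩
      · exact absurd h ha0
    · exfalso
      apply hb0
      rw [Submodule.mem_span_singleton]
      have h' : t • b = (-s) • a := by
        rw [neg_smul]
        exact eq_neg_of_add_eq_zero_left (by simpa [add_comm] using h)
      refine ⟨-(t⁻¹ * s), smul_right_injective _ ht ?_⟩
      show t • (-(t⁻¹ * s) • a) = t • b
      rw [smul_smul, h']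
      congr 1
      field_simp
  -- any combination of a and b is a relation
  have hmemlin : ∀ s t : F, ∑ k, (s • a + t • b) k • v k = 0 := by
    intro s t
    have hrw : ∑ k, (s • a + t • b) k • v k
        = s • ∑ k, a k • v k + t • ∑ k, b k • v k := by
      rw [Finset.smul_sum, Finset.smul_sum, ← Finset.sum_add_distrib]
      refine Finset.sum_congr rfl fun k _ => ?_
      simp [add_smul, mul_smul]
    rw [hrw, hamem, hbmem]
    simp
  -- 2x2 determinants are nonzero
  have hdet : ∀ i j : Fin (q + 2), i ≠ j → a i * b j ≠ a j * b i := by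
    intro i j hij hEq
    have hcj : b j • a + (-(a j)) • b = 0 := by
      apply key _ (hmemlin _ _) i j hij
      · show b j * a i + -(a j) * b i = 0
        linear_combination hEq
      · show b j * a j + -(a j) * b j = 0
        ring
    have hj0 := hpair _ _ hcj
    have hci : b i • a + (-(a i)) • b = 0 := by
      apply key _ (hmemlin _ _) i j hij
      · show b i * a i + -(a i) * b i = 0
        ring
      · show b i * a j + -(a i) * b j = 0
        linear_combination -hEq
    have hi0 := hpair _ _ hci
    -- now a vanishes at i and j, so a = 0
    have ha' : a = 0 := by
      apply key a hamem i j hij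
      · have := hi0.2; simpa using this
      · have := hj0.2; simpa using this
    exact ha0 ha'
  -- pigeonhole on slopes
  classical
  have hcardlt : Fintype.card (Option F) < Fintype.card (Fin (q + 2)) := by
    simp [← hq]
  obtain ⟨i, j, hij, hsl⟩ := Fintype.exists_ne_map_eq_of_card_lt
    (fun i => if a i = 0 then (none : Option F) else some (b i / a i)) hcardlt
  apply hdet i j hij
  by_cases hi : a i = 0 <;> by_cases hj : a j = 0
  · simp [hi, hj]
  · exfalso; simp [hi, hj] at hsl
  · exfalso; simp [hi, hj] at hsl
  · have hsl' : b i / a i = b j / a j := by simpa [hi, hj] using hsl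
    field_simp at hsl'
    linear_combination -hsl'
end

section
/- Let t ≥ 4 and r ≥ 2 be integers, and for n ≥ r let ex(n,r,t) denote the maximum size of a family of r-element subsets of [n] that is both D_r(2,t)-free and D_r(t−2,t)-free. Then for all n ≥ r, (r+1)·ex(n+1,r+1,t) ≤ (n+1)·ex(n,r,t); consequently ex(n+1,r+1,t)/C(n+1,r+1) ≤ ex(n,r,t)/C(n,r). -/
/-- `exD n r t` is the maximum size of a family of `r`-element subsets of `[n]` that is
both `D_r(2,t)`-free and `D_r(t-2,t)`-free. -/
noncomputable def exD (n r t : ℕ) : ℕ :=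
  sSup {k | ∃ F : Finset (Finset (Fin n)), (∀ A ∈ F, A.card = r) ∧
    IsDaisyFree r 2 t F ∧ IsDaisyFree r (t - 2) t F ∧ F.card = k}

lemma exD_bdd (n r t : ℕ) : BddAbove {k | ∃ F : Finset (Finset (Fin n)), (∀ A ∈ F, A.card = r) ∧
    IsDaisyFree r 2 t F ∧ IsDaisyFree r (t - 2) t F ∧ F.card = k} := by
  refine ⟨Fintype.card (Finset (Fin n)), ?_⟩
  rintro k ⟨F, -, -, -, rfl⟩
  exact Finset.card_le_univ F

lemma empty_free {α : Type*} [DecidableEq α] (r s t : ℕ) (hst : s ≤ t) :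
    IsDaisyFree r s t (∅ : Finset (Finset α)) := by
  rintro ⟨S, T, hS, hT, hd, hall⟩
  obtain ⟨X, hXT, hXcard⟩ := Finset.exists_subset_card_eq (hT ▸ hst)
  exact absurd (hall X hXT hXcard) (Finset.notMem_empty _)

lemma exD_nonempty (n r t : ℕ) (h2 : 2 ≤ t) :
    Set.Nonempty {k | ∃ F : Finset (Finset (Fin n)), (∀ A ∈ F, A.card = r) ∧
    IsDaisyFree r 2 t F ∧ IsDaisyFree r (t - 2) t F ∧ F.card = k} :=
  ⟨0, ∅, by simp, empty_free _ _ _ h2, empty_free _ _ _ (Nat.sub_le t 2), Finset.card_empty⟩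

lemma le_exD {n r t : ℕ} {F : Finset (Finset (Fin n))} (h1 : ∀ A ∈ F, A.card = r)
    (h2 : IsDaisyFree r 2 t F) (h3 : IsDaisyFree r (t - 2) t F) : F.card ≤ exD n r t :=
  le_csSup (exD_bdd n r t) ⟨F, h1, h2, h3, rfl⟩

lemma exD_mem (n r t : ℕ) (h2 : 2 ≤ t) : ∃ F : Finset (Finset (Fin n)),
    (∀ A ∈ F, A.card = r) ∧ IsDaisyFree r 2 t F ∧ IsDaisyFree r (t - 2) t F ∧
    F.card = exD n r t :=
  Nat.sSup_mem (exD_nonempty n r t h2) (exD_bdd n r t)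

open Finset in
lemma link_bound (t r n : ℕ) (F : Finset (Finset (Fin (n + 1))))
    (hu : ∀ A ∈ F, A.card = r + 1) (x : Fin (n + 1)) :
    ∃ G : Finset (Finset (Fin n)), (∀ C ∈ G, C.card = r) ∧
      G.card = (F.filter (fun A => x ∈ A)).card ∧
      (∀ s : ℕ, s ≤ t → s ≤ r → IsDaisyFree (r + 1) s t F → IsDaisyFree r s t G) := by
  classical
  set e : Fin n → Fin (n + 1) := x.succAbove with he_def
  have he : Function.Injective e := Fin.succAbove_right_injective
  set Fx : Finset (Finset (Fin (n + 1))) :=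
    (F.filter (fun A => x ∈ A)).image (fun A => A.erase x) with hFx_def
  have hFxmem : ∀ B ∈ Fx, B.card = r ∧ x ∉ B ∧ insert x B ∈ F := by
    rintro B hB
    obtain ⟨A, hA, rfl⟩ := mem_image.mp hB
    obtain ⟨hAF, hxA⟩ := mem_filter.mp hA
    refine ⟨?_, notMem_erase _ _, by rwa [insert_erase hxA]⟩
    rw [card_erase_of_mem hxA, hu A hAF]
    omega
  have hFxcard : Fx.card = (F.filter (fun A => x ∈ A)).card := by
    apply card_image_of_injOn
    intro A hA B hB hAB
    obtain ⟨-, hxA⟩ := mem_filter.mp hA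
    obtain ⟨-, hxB⟩ := mem_filter.mp hB
    rw [← insert_erase hxA, ← insert_erase hxB]
    exact congrArg (insert x) hAB
  set pre : Finset (Fin (n + 1)) → Finset (Fin n) :=
    fun B => B.preimage e he.injOn with hpre_def
  have himg : ∀ B : Finset (Fin (n + 1)), x ∉ B → (pre B).image e = B := by
    intro B hxB
    rw [hpre_def, Finset.image_preimage]
    apply filter_true_of_mem
    intro y hy
    obtain ⟨z, hz⟩ := Fin.exists_succAbove_eq (show y ≠ x from fun h => hxB (h ▸ hy))
    exact ⟨z, hz⟩
  refine ⟨Fx.image pre, ?_, ?_, ?_⟩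
  · rintro C hC
    obtain ⟨B, hB, rfl⟩ := mem_image.mp hC
    obtain ⟨hBr, hxB, -⟩ := hFxmem B hB
    calc (pre B).card = ((pre B).image e).card := (card_image_of_injective _ he).symm
      _ = B.card := by rw [himg B hxB]
      _ = r := hBr
  · rw [← hFxcard]
    apply card_image_of_injOn
    intro A hA B hB hAB
    obtain ⟨-, hxA, -⟩ := hFxmem A hA
    obtain ⟨-, hxB, -⟩ := hFxmem B hB
    rw [← himg A hxA, ← himg B hxB, hAB]
  · intro s hst hsr hF
    rintro ⟨S, T, hS, hT, hd, hall⟩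
    apply hF
    have hxS : x ∉ S.image e := by
      simp only [mem_image]
      rintro ⟨z, -, hz⟩
      exact Fin.succAbove_ne x z hz
    have hxT : x ∉ T.image e := by
      simp only [mem_image]
      rintro ⟨z, -, hz⟩
      exact Fin.succAbove_ne x z hz
    refine ⟨insert x (S.image e), T.image e, ?_, ?_, ?_, ?_⟩
    · rw [card_insert_of_notMem hxS, card_image_of_injective _ he, hS]
      omega
    · rw [card_image_of_injective _ he, hT]
    · rw [disjoint_insert_left]
      exact ⟨hxT, (disjoint_image he).mpr hd⟩
    · intro X hX hXcard
      obtain ⟨X₀, hX₀T, rfl⟩ := Finset.subset_image_iff.mp hX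
      rw [card_image_of_injective _ he] at hXcard
      have hmem := hall X₀ hX₀T hXcard
      obtain ⟨B, hB, hpreB⟩ := mem_image.mp hmem
      obtain ⟨-, hxB, hins⟩ := hFxmem B hB
      have hBeq : B = (S ∪ X₀).image e := by rw [← hpreB, himg B hxB]
      have : insert x (S.image e) ∪ X₀.image e = insert x B := by
        rw [hBeq, Finset.image_union, Finset.insert_union]
      rw [this]
      exact hins

/-- For `t ≥ 4`, `r ≥ 2` and `n ≥ r` we have `(r+1)·ex(n+1,r+1,t) ≤ (n+1)·ex(n,r,t)`;
consequently `ex(n+1,r+1,t)/C(n+1,r+1) ≤ ex(n,r,t)/C(n,r)`. -/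
theorem exD_monotone_uniformity (t r n : ℕ) (ht : 4 ≤ t) (hr : 2 ≤ r) (hn : r ≤ n) :
    (r + 1) * exD (n + 1) (r + 1) t ≤ (n + 1) * exD n r t ∧
    (exD (n + 1) (r + 1) t : ℝ) / ((n + 1).choose (r + 1) : ℝ) ≤
      (exD n r t : ℝ) / (n.choose r : ℝ) := by
  classical
  have hmain : (r + 1) * exD (n + 1) (r + 1) t ≤ (n + 1) * exD n r t := by
    obtain ⟨F, hu, h2, h3, hcard⟩ := exD_mem (n + 1) (r + 1) t (by omega)
    -- per-vertex bound
    have hx : ∀ x : Fin (n + 1), (F.filter (fun A => x ∈ A)).card ≤ exD n r t := by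
      intro x
      obtain ⟨G, hGu, hGcard, hGfree⟩ := link_bound t r n F hu x
      rw [← hGcard]
      refine le_exD hGu (hGfree 2 (by omega) hr h2) ?_
      by_cases hsr : t - 2 ≤ r
      · exact hGfree (t - 2) (by omega) hsr h3
      · -- degenerate: members have card r but daisy needs a set of card t - 2 > r
        rintro ⟨S, T, hS, hT, hd, hall⟩
        obtain ⟨X, hXT, hXcard⟩ := Finset.exists_subset_card_eq (show t - 2 ≤ T.card by omega)
        have hmem := hall X hXT hXcard
        have h1 := hGu _ hmem
        have h2' : X.card ≤ (S ∪ X).card := Finset.card_le_card Finset.subset_union_right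
        omega
    have hcount : (r + 1) * F.card = ∑ x : Fin (n + 1), (F.filter (fun A => x ∈ A)).card := by
      have : ∀ x : Fin (n + 1), (F.filter (fun A => x ∈ A)).card
          = ∑ A ∈ F, if x ∈ A then 1 else 0 := fun x => Finset.card_filter _ _
      simp only [this]
      rw [Finset.sum_comm]
      have : ∀ A ∈ F, (∑ x : Fin (n + 1), if x ∈ A then 1 else 0) = r + 1 := by
        intro A hA
        rw [Finset.sum_ite_mem, Finset.univ_inter, Finset.sum_const, smul_eq_mul,
          mul_one, hu A hA]
      rw [Finset.sum_congr rfl this, Finset.sum_const, smul_eq_mul, mul_comm]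
    calc (r + 1) * exD (n + 1) (r + 1) t = (r + 1) * F.card := by rw [hcard]
      _ = ∑ x : Fin (n + 1), (F.filter (fun A => x ∈ A)).card := hcount
      _ ≤ ∑ _x : Fin (n + 1), exD n r t := Finset.sum_le_sum fun x _ => hx x
      _ = (n + 1) * exD n r t := by
          rw [Finset.sum_const, Finset.card_univ, Fintype.card_fin, smul_eq_mul]
  refine ⟨hmain, ?_⟩
  have hnat : exD (n + 1) (r + 1) t * n.choose r ≤ exD n r t * (n + 1).choose (r + 1) := by
    apply Nat.le_of_mul_le_mul_left _ (show 0 < r + 1 by omega)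
    calc (r + 1) * (exD (n + 1) (r + 1) t * n.choose r)
        = ((r + 1) * exD (n + 1) (r + 1) t) * n.choose r := by ring
      _ ≤ ((n + 1) * exD n r t) * n.choose r := Nat.mul_le_mul_right _ hmain
      _ = exD n r t * ((n + 1) * n.choose r) := by ring
      _ = exD n r t * ((n + 1).choose (r + 1) * (r + 1)) := by
          rw [Nat.add_one_mul_choose_eq]
      _ = (r + 1) * (exD n r t * (n + 1).choose (r + 1)) := by ring
  have hpos1 : (0 : ℝ) < (n + 1).choose (r + 1) := by
    exact_mod_cast Nat.choose_pos (by omega)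
  have hpos2 : (0 : ℝ) < n.choose r := by
    exact_mod_cast Nat.choose_pos hn
  rw [div_le_div_iff₀ hpos1 hpos2]
  exact_mod_cast hnat
end

section
/- Let F be a finite field with q elements and let r ≥ 2 be an integer. Let B be the family of all r-element subsets of F^r \ {0} that are bases of the vector space F^r. Then B is D_r(2,q+2)-free and D_r(q,q+2)-free (as a family of r-element subsets of the ground set F^r \ {0}). -/
/-!
Work modulo the span of the stem `S`. If every `S ∪ X` with `X` an `s`-subset of the petal set `T`
is a basis, then the images of `T` form a family of `q + 2` vectors in a space of dimension `s`,
every `s` of which form a basis.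

For `s = 2` these are `q + 2` pairwise independent vectors in a plane, that is, `q + 2` distinct
points of the projective line, which has only `q + 1` points.

For `s = q` pass to the Gale dual: the linear relations among the `q + 2` vectors form a
`2`-dimensional space `N`. A nonzero relation vanishing at two indices would be a relation among
the remaining `q` vectors, so the `q + 2` evaluation functionals on `N` are pairwise independent,
and again there are at most `q + 1` of them.
-/

/-- A family `F` of finsets of `α` is `D_r(s,t)`-free on the ground set `V`: there is no
`(r,s,t)`-daisy with stem `S ⊆ V` and petal-set `T ⊆ V` all of whose petals lie in `F`. -/
def IsDaisyFreeOn {α : Type*} [DecidableEq α] (V : Set α) (r s t : ℕ)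
    (F : Finset (Finset α)) : Prop :=
  ¬ ∃ S T : Finset α, ↑S ⊆ V ∧ ↑T ⊆ V ∧ S.card = r - s ∧ T.card = t ∧ Disjoint S T ∧
      ∀ X ⊆ T, X.card = s → S ∪ X ∈ F

open Finset Module Submodule

section

variable {K W ι : Type*} [Field K] [AddCommGroup W] [Module K W]

variable (K) in
def IsBasisOn (f : ι → W) (s : Set ι) : Prop :=
  LinearIndepOn K f s ∧ span K (f '' s) = ⊤

theorem IsBasisOn.finrank_eq {f : ι → W} {X : Finset ι} (h : IsBasisOn K f X) :
    finrank K W = #X := by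
  have := finrank_span_eq_card h.1
  rw [← Set.image_eq_range, h.2, finrank_top] at this
  simpa using this

theorem IsBasisOn.mkQ_of_union {S X : Set W} (hSX : Disjoint S X) (h : IsBasisOn K id (S ∪ X)) :
    IsBasisOn K (span K S).mkQ X := by
  refine ⟨?_, ?_⟩
  · have := ((linearIndepOn_union_iff_quotient hSX).1 h.1).2
    rwa [Set.image_id] at this
  · rw [← map_span, map_mkQ_eq_top, ← span_union, ← Set.image_id (S ∪ X), h.2]

theorem IsBasisOn.comp_of_image {ι' : Type*} {f : ι → W} {g : ι' → ι} {s : Set ι'}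
    (h : IsBasisOn K f (g '' s)) (hg : Set.InjOn g s) : IsBasisOn K (f ∘ g) s :=
  ⟨h.1.comp_of_image hg, by rw [Set.image_comp, h.2]⟩

theorem isBasisOn_mkQ_comp_val [DecidableEq W] {S T : Finset W} (hST : Disjoint S T) {s : ℕ}
    (h : ∀ X ⊆ T, #X = s → IsBasisOn K id (↑(S ∪ X) : Set W)) (X : Finset T) (hX : #X = s) :
    IsBasisOn K ((span K (S : Set W)).mkQ ∘ Subtype.val) (X : Set T) := by
  let Y := X.map (Function.Embedding.subtype (· ∈ T))
  have hYT : Y ⊆ T := by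
    intro y hy
    obtain ⟨x, -, rfl⟩ := mem_map.1 hy
    exact x.2
  have hY := h Y hYT (by rw [card_map, hX])
  rw [coe_union] at hY
  have hYq := hY.mkQ_of_union (disjoint_coe.2 (hST.mono_right hYT))
  rw [coe_map, Function.Embedding.coe_subtype] at hYq
  exact hYq.comp_of_image Subtype.val_injective.injOn

variable [Fintype ι]

theorem card_le_of_linearIndepOn_pair [Finite K] (hW : finrank K W = 2) {f : ι → W}
    (hf : ∀ i j, i ≠ j → LinearIndepOn K f {i, j}) : Fintype.card ι ≤ Nat.card K + 1 := by
  rcases le_or_gt (Fintype.card ι) 1 with hι | hι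
  · omega
  have hf₀ (i : ι) : f i ≠ 0 := by
    obtain ⟨j, hji⟩ := Fintype.exists_ne_of_one_lt_card hι i
    exact (hf i j hji.symm).ne_zero (Set.mem_insert i _)
  have : FiniteDimensional K W := .of_finrank_pos (by omega)
  have : Finite W := Module.finite_of_finite K
  have : Finite (Projectivization K W) := (Projectivization.finite_iff_of_finite K W).2 this
  rw [← Projectivization.card_of_finrank_two K W hW, ← Nat.card_eq_fintype_card]
  refine Nat.card_le_card_of_injective (fun i ↦ Projectivization.mk K (f i) (hf₀ i)) ?_
  intro i j hij
  by_contra hne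
  obtain ⟨a, ha⟩ := (Projectivization.mk_eq_mk_iff' K _ _ _ _).1 hij
  exact (linearIndepOn_pair_iff f (Ne.symm hne) (hf₀ j)).1 (hf j i (Ne.symm hne)) a ha

theorem card_le_of_forall_isBasisOn_pair [Finite K] {f : ι → W}
    (hf : ∀ X : Finset ι, #X = 2 → IsBasisOn K f X) : Fintype.card ι ≤ Nat.card K + 1 := by
  classical
  rcases le_or_gt (Fintype.card ι) 1 with hι | hι
  · omega
  obtain ⟨X, -, hX⟩ := exists_subset_card_eq (s := (univ : Finset ι)) (n := 2)
    (by rw [card_univ]; omega)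
  refine card_le_of_linearIndepOn_pair (f := f) ((hf X hX).finrank_eq.trans hX)
    fun i j hij ↦ ?_
  simpa using (hf {i, j} (card_pair hij)).1

theorem card_le_of_forall_isBasisOn_of_card_eq_add_two [Finite K] {f : ι → W} {n : ℕ}
    (hι : Fintype.card ι = n + 2) (hf : ∀ X : Finset ι, #X = n → IsBasisOn K f X) :
    Fintype.card ι ≤ Nat.card K + 1 := by
  classical
  obtain ⟨X₀, -, hX₀⟩ := exists_subset_card_eq (s := (univ : Finset ι)) (n := n)
    (by rw [card_univ]; omega)
  have hW : finrank K W = n := (hf X₀ hX₀).finrank_eq.trans hX₀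
  let φ := Fintype.linearCombination K f
  let N := LinearMap.ker φ
  have hφ : LinearMap.range φ = ⊤ := by
    rw [Fintype.range_linearCombination, eq_top_iff, ← (hf X₀ hX₀).2]
    exact span_mono (Set.image_subset_range _ _)
  have hN : finrank K N = 2 := by
    have := LinearMap.finrank_range_add_finrank_ker φ
    rw [hφ, finrank_top, hW, finrank_fintype_fun_eq_card, hι] at this
    exact Nat.add_left_cancel this
  have hN_eq_zero (i j : ι) (hij : i ≠ j) (l : N) (hi : l.1 i = 0) (hj : l.1 j = 0) : l = 0 := by
    have hX : #(univ \ {i, j}) = n := by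
      rw [card_sdiff_of_subset (subset_univ _), card_univ, card_pair hij, hι, Nat.add_sub_cancel]
    have hl : ∑ x ∈ univ \ {i, j}, l.1 x • f x = 0 := by
      rw [sum_subset (subset_univ _)]
      · exact l.2
      · intro x _ hx
        obtain rfl | rfl : x = i ∨ x = j := by simpa [or_iff_not_imp_left] using hx
        · simp [hi]
        · simp [hj]
    have hl_zero := linearIndepOn_finset_iff.1 (hf _ hX).1 l.1 hl
    refine Subtype.ext (funext fun x ↦ ?_)
    by_cases hx : x = i ∨ x = j
    · rcases hx with rfl | rfl <;> assumption
    · exact hl_zero x (by simpa using hx)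
  let ev (i : ι) : Dual K N := LinearMap.proj i ∘ₗ N.subtype
  refine card_le_of_linearIndepOn_pair (f := ev) (by rw [Subspace.dual_finrank_eq, hN])
    fun i j hij ↦ ?_
  rw [LinearIndepOn.pair_iff _ hij]
  intro c d hcd
  have hsurj : Function.Surjective ((ev i).prod (ev j)) := by
    refine (LinearMap.injective_iff_surjective_of_finrank_eq_finrank (by simp [hN])).1 ?_
    rw [← LinearMap.ker_eq_bot, eq_bot_iff]
    intro l hl
    exact hN_eq_zero i j hij l (congrArg Prod.fst hl) (congrArg Prod.snd hl)
  obtain ⟨l₁, hl₁⟩ := hsurj (1, 0)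
  obtain ⟨l₂, hl₂⟩ := hsurj (0, 1)
  have h₁ : c * ev i l₁ + d * ev j l₁ = 0 := LinearMap.congr_fun hcd l₁
  have h₂ : c * ev i l₂ + d * ev j l₂ = 0 := LinearMap.congr_fun hcd l₂
  simp only [LinearMap.prod_apply] at hl₁ hl₂
  simp_all

end

theorem bases_daisy_free_general (K : Type*) [Field K] [Fintype K] [DecidableEq K]
    (q : ℕ) (hq : q = Fintype.card K) (r : ℕ)
    (B : Finset (Finset (Fin r → K)))
    (hB : ∀ A : Finset (Fin r → K),
      A ∈ B ↔ A.card = r ∧ (0 : Fin r → K) ∉ A ∧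
        LinearIndependent K (fun x : (A : Set (Fin r → K)) => (x : Fin r → K)) ∧
        Submodule.span K (A : Set (Fin r → K)) = ⊤) :
    IsDaisyFreeOn {v : Fin r → K | v ≠ 0} r 2 (q + 2) B ∧
    IsDaisyFreeOn {v : Fin r → K | v ≠ 0} r q (q + 2) B := by
  have hbasis (A : Finset (Fin r → K)) (hA : A ∈ B) : IsBasisOn K id (A : Set (Fin r → K)) := by
    obtain ⟨-, -, hli, hspan⟩ := (hB A).1 hA
    exact ⟨hli, by rwa [Set.image_id]⟩
  have hcard : Nat.card K = q := by rw [hq, Nat.card_eq_fintype_card]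
  refine ⟨?_, ?_⟩ <;> rintro ⟨S, T, -, -, -, hT, hST, hall⟩
  · have := card_le_of_forall_isBasisOn_pair fun X hX ↦
      isBasisOn_mkQ_comp_val hST (fun Y hYT hY ↦ hbasis _ (hall Y hYT hY)) X hX
    rw [Fintype.card_coe, hT, hcard] at this
    omega
  · have := card_le_of_forall_isBasisOn_of_card_eq_add_two (by rw [Fintype.card_coe, hT])
      fun X hX ↦ isBasisOn_mkQ_comp_val hST (fun Y hYT hY ↦ hbasis _ (hall Y hYT hY)) X hX
    rw [Fintype.card_coe, hT, hcard] at this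
    omega

/-- Let `K` be a finite field with `q` elements and `r ≥ 2`. The family `B` of all
`r`-element subsets of `K^r \ {0}` that are bases of `K^r` is both `D_r(2,q+2)`-free and
`D_r(q,q+2)`-free on the ground set `K^r \ {0}`. -/
theorem bases_daisy_free (K : Type*) [Field K] [Fintype K] [DecidableEq K]
    (q : ℕ) (hq : q = Fintype.card K) (r : ℕ) (hr : 2 ≤ r)
    (B : Finset (Finset (Fin r → K)))
    (hB : ∀ A : Finset (Fin r → K),
      A ∈ B ↔ A.card = r ∧ (0 : Fin r → K) ∉ A ∧
        LinearIndependent K (fun x : (A : Set (Fin r → K)) => (x : Fin r → K)) ∧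
        Submodule.span K (A : Set (Fin r → K)) = ⊤) :
    IsDaisyFreeOn {v : Fin r → K | v ≠ 0} r 2 (q + 2) B ∧
    IsDaisyFreeOn {v : Fin r → K | v ≠ 0} r q (q + 2) B :=
  bases_daisy_free_general K q hq r B hB
end

section
/- For n ≥ r ≥ 1, let l(n,6,r) denote the maximum of |F_1|/C(n,r) + |F_2|/C(n,r−1) over all families F_1 of r-element subsets of [n] and F_2 of (r−1)-element subsets of [n] such that F_1 ∪ F_2 does not contain a copy of the layers i and i−1 of a Q_6 for any 2 ≤ i ≤ 5. Then for all n ≥ r+1, l(n,6,r) ≤ l(n−1,6,r); that is, l(n,6,r) is monotone decreasing in n. -/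
/-- `F` contains a copy of the layers `i` and `i-1` of a `Q_6` (for some `2 ≤ i ≤ 5`),
inside the layers `r-1` and `r` of the power set of the ground type: there are `X` of size 6
and `Y` disjoint from `X` with `|Y| = r - i`, such that `Y ∪ A ∈ F` for every
`A ⊆ X` with `|A| = i - 1` or `|A| = i`. -/
def ContainsQ6Layers {α : Type*} [DecidableEq α] (r : ℕ) (F : Finset (Finset α)) : Prop :=
  ∃ i : ℕ, 2 ≤ i ∧ i ≤ 5 ∧
    ∃ X Y : Finset α, X.card = 6 ∧ Disjoint X Y ∧ Y.card + i = r ∧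
      (∀ A ⊆ X, A.card = i - 1 → Y ∪ A ∈ F) ∧
      (∀ A ⊆ X, A.card = i → Y ∪ A ∈ F)

/-- `lval n r` is the maximum density-sum `|F₁|/C(n,r) + |F₂|/C(n,r-1)` over families
`F₁ ⊆ [n]^(r)`, `F₂ ⊆ [n]^(r-1)` such that `F₁ ∪ F₂` contains no copy of two consecutive
nontrivial layers of a `Q_6`. -/
noncomputable def lval (n r : ℕ) : ℝ :=
  sSup {x : ℝ | ∃ F₁ F₂ : Finset (Finset (Fin n)),
    (∀ A ∈ F₁, A.card = r) ∧ (∀ A ∈ F₂, A.card = r - 1) ∧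
    ¬ ContainsQ6Layers r (F₁ ∪ F₂) ∧
    x = (F₁.card : ℝ) / (n.choose r : ℝ) + (F₂.card : ℝ) / (n.choose (r - 1) : ℝ)}

section Aux

variable {m : ℕ}

/-- Restriction of a family on `Fin (m+1)` to the ground set missing `j`. -/
def myres (j : Fin (m+1)) (F : Finset (Finset (Fin (m+1)))) : Finset (Finset (Fin m)) :=
  Finset.univ.filter (fun B => B.map j.succAboveEmb ∈ F)

lemma mem_myres {j : Fin (m+1)} {F : Finset (Finset (Fin (m+1)))} {B : Finset (Fin m)} :
    B ∈ myres j F ↔ B.map j.succAboveEmb ∈ F := by simp [myres]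

lemma myres_union (j : Fin (m+1)) (F G : Finset (Finset (Fin (m+1)))) :
    myres j (F ∪ G) = myres j F ∪ myres j G := by
  ext B; simp [mem_myres, Finset.mem_union]

lemma myres_card (j : Fin (m+1)) (F : Finset (Finset (Fin (m+1)))) :
    (myres j F).card = (F.filter (fun A => j ∉ A)).card := by
  apply Finset.card_bij (fun B _ => B.map j.succAboveEmb)
  · intro B hB
    rw [mem_myres] at hB
    simp only [Finset.mem_filter]
    refine ⟨hB, ?_⟩
    simp only [Finset.mem_map, Fin.succAboveEmb_apply]
    rintro ⟨b, -, hb⟩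
    exact Fin.succAbove_ne j b hb
  · intro B₁ h₁ B₂ h₂ h
    exact Finset.map_injective _ h
  · intro A hA
    rw [Finset.mem_filter] at hA
    have hsub : A ⊆ Finset.univ.map j.succAboveEmb := by
      intro x hx
      simp only [Finset.mem_map, Finset.mem_univ, true_and, Fin.succAboveEmb_apply]
      exact Fin.exists_succAbove_eq (fun h => hA.2 (h ▸ hx))
    obtain ⟨B, -, rfl⟩ := Finset.subset_map_iff.1 hsub
    exact ⟨B, mem_myres.2 hA.1, rfl⟩

lemma sum_filter_notmem (F : Finset (Finset (Fin (m+1)))) (k : ℕ)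
    (hF : ∀ A ∈ F, A.card = k) :
    ∑ j : Fin (m+1), (F.filter (fun A => j ∉ A)).card = (m + 1 - k) * F.card := by
  have h1 : ∀ j : Fin (m+1), (F.filter (fun A => j ∉ A)).card
      = ∑ A ∈ F, (if j ∉ A then 1 else 0) := by
    intro j; rw [Finset.card_filter]
  simp_rw [h1]
  rw [Finset.sum_comm]
  have h2 : ∀ A ∈ F, ∑ j : Fin (m+1), (if j ∉ A then 1 else 0) = m + 1 - k := by
    intro A hA
    rw [← Finset.card_filter]
    have : Finset.univ.filter (fun j => j ∉ A) = Aᶜ := by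
      ext j; simp
    rw [this, Finset.card_compl, ← hF A hA]
    simp
  rw [Finset.sum_congr rfl h2, Finset.sum_const, smul_eq_mul, mul_comm]

lemma choose_id (s : ℕ) (h : s ≤ m) :
    (m + 1) * m.choose s = (m + 1 - s) * (m + 1).choose s := by
  have h1 : m.choose s = m.choose (m - s) := (Nat.choose_symm h).symm
  have h2 : (m + 1).choose (m - s + 1) = (m + 1).choose s := by
    conv_rhs => rw [← Nat.choose_symm (by omega : s ≤ m + 1)]
    congr 1
    omega
  have h3 := Nat.add_one_mul_choose_eq m (m - s)
  rw [h1, h3, h2]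
  have : m - s + 1 = m + 1 - s := by omega
  rw [this, mul_comm]

lemma contains_of_myres {r : ℕ} {F : Finset (Finset (Fin (m+1)))} {j : Fin (m+1)}
    (h : ContainsQ6Layers r (myres j F)) : ContainsQ6Layers r F := by
  obtain ⟨i, hi2, hi5, X, Y, hX, hdisj, hYr, hA1, hA2⟩ := h
  refine ⟨i, hi2, hi5, X.map j.succAboveEmb, Y.map j.succAboveEmb, by simp [hX],
    by rwa [Finset.disjoint_map], by simpa using hYr, ?_, ?_⟩
  · intro A hA hAc
    obtain ⟨B, hBX, rfl⟩ := Finset.subset_map_iff.1 hA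
    rw [← Finset.map_union]
    have := mem_myres.1 (hA1 B hBX (by simpa using hAc))
    simpa using this
  · intro A hA hAc
    obtain ⟨B, hBX, rfl⟩ := Finset.subset_map_iff.1 hA
    rw [← Finset.map_union]
    have := mem_myres.1 (hA2 B hBX (by simpa using hAc))
    simpa using this

/-- The defining set of `lval` is bounded above by 2, provided the relevant
binomial coefficients are positive. -/
lemma lval_set_bddAbove {n r : ℕ} (hr : r ≤ n) :
    ∀ x ∈ {x : ℝ | ∃ F₁ F₂ : Finset (Finset (Fin n)),
      (∀ A ∈ F₁, A.card = r) ∧ (∀ A ∈ F₂, A.card = r - 1) ∧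
      ¬ ContainsQ6Layers r (F₁ ∪ F₂) ∧
      x = (F₁.card : ℝ) / (n.choose r : ℝ) + (F₂.card : ℝ) / (n.choose (r - 1) : ℝ)}, x ≤ 2 := by
  rintro x ⟨F₁, F₂, h₁, h₂, -, rfl⟩
  have hc1 : (0:ℝ) < (n.choose r : ℝ) := by exact_mod_cast Nat.choose_pos hr
  have hc2 : (0:ℝ) < (n.choose (r-1) : ℝ) := by
    exact_mod_cast Nat.choose_pos (le_trans (Nat.sub_le r 1) hr)
  have hb1 : (F₁.card : ℝ) ≤ (n.choose r : ℝ) := by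
    have : F₁ ⊆ Finset.univ.powersetCard r := by
      intro A hA
      rw [Finset.mem_powersetCard]
      exact ⟨Finset.subset_univ A, h₁ A hA⟩
    have := Finset.card_le_card this
    rw [Finset.card_powersetCard, Finset.card_univ, Fintype.card_fin] at this
    exact_mod_cast this
  have hb2 : (F₂.card : ℝ) ≤ (n.choose (r-1) : ℝ) := by
    have : F₂ ⊆ Finset.univ.powersetCard (r-1) := by
      intro A hA
      rw [Finset.mem_powersetCard]
      exact ⟨Finset.subset_univ A, h₂ A hA⟩
    have := Finset.card_le_card this
    rw [Finset.card_powersetCard, Finset.card_univ, Fintype.card_fin] at this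
    exact_mod_cast this
  have e1 : (F₁.card : ℝ) / (n.choose r : ℝ) ≤ 1 := by
    rw [div_le_one hc1]; exact hb1
  have e2 : (F₂.card : ℝ) / (n.choose (r-1) : ℝ) ≤ 1 := by
    rw [div_le_one hc2]; exact hb2
  linarith

lemma zero_mem_lval_set (n r : ℕ) :
    (0:ℝ) ∈ {x : ℝ | ∃ F₁ F₂ : Finset (Finset (Fin n)),
      (∀ A ∈ F₁, A.card = r) ∧ (∀ A ∈ F₂, A.card = r - 1) ∧
      ¬ ContainsQ6Layers r (F₁ ∪ F₂) ∧
      x = (F₁.card : ℝ) / (n.choose r : ℝ) + (F₂.card : ℝ) / (n.choose (r - 1) : ℝ)} := by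
  refine ⟨∅, ∅, by simp, by simp, ?_, by simp⟩
  rintro ⟨i, hi2, hi5, X, Y, hX, -, -, hA1, -⟩
  obtain ⟨A, hAX, hAc⟩ := Finset.exists_subset_card_eq (show i - 1 ≤ X.card by omega)
  have := hA1 A hAX hAc
  simp at this

end Aux

/-- `l(n,6,r)` is monotone decreasing in `n`: for `n ≥ r + 1`, `l(n,6,r) ≤ l(n-1,6,r)`. -/
theorem lval_monotone_ground (r n : ℕ) (hr : 1 ≤ r) (hn : r + 1 ≤ n) :
    lval n r ≤ lval (n - 1) r := by
  obtain ⟨m, rfl⟩ : ∃ m, n = m + 1 := ⟨n - 1, by omega⟩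
  have hrm : r ≤ m := by omega
  have hrm' : r - 1 ≤ m := by omega
  simp only [Nat.add_sub_cancel]
  -- positivity of the binomial coefficients
  have hc1 : (0:ℝ) < (m.choose r : ℝ) := by exact_mod_cast Nat.choose_pos hrm
  have hc2 : (0:ℝ) < (m.choose (r-1) : ℝ) := by exact_mod_cast Nat.choose_pos hrm'
  have hC1 : (0:ℝ) < ((m+1).choose r : ℝ) := by
    exact_mod_cast Nat.choose_pos (by omega : r ≤ m + 1)
  have hC2 : (0:ℝ) < ((m+1).choose (r-1) : ℝ) := by
    exact_mod_cast Nat.choose_pos (by omega : r - 1 ≤ m + 1)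
  have hbdd : BddAbove {x : ℝ | ∃ F₁ F₂ : Finset (Finset (Fin m)),
      (∀ A ∈ F₁, A.card = r) ∧ (∀ A ∈ F₂, A.card = r - 1) ∧
      ¬ ContainsQ6Layers r (F₁ ∪ F₂) ∧
      x = (F₁.card : ℝ) / (m.choose r : ℝ) + (F₂.card : ℝ) / (m.choose (r - 1) : ℝ)} :=
    ⟨2, lval_set_bddAbove hrm⟩
  have hl0 : (0:ℝ) ≤ lval m r := le_csSup hbdd (zero_mem_lval_set m r)
  rw [lval]
  apply Real.sSup_le _ hl0
  rintro x ⟨F₁, F₂, h₁, h₂, hnc, rfl⟩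
  set x := (F₁.card : ℝ) / ((m+1).choose r : ℝ) + (F₂.card : ℝ) / ((m+1).choose (r - 1) : ℝ)
    with hxdef
  -- the densities of the restricted families
  set d : Fin (m+1) → ℝ := fun j =>
    ((myres j F₁).card : ℝ) / (m.choose r : ℝ) + ((myres j F₂).card : ℝ) / (m.choose (r-1) : ℝ)
    with hd
  -- sum of densities equals (m+1) * x
  have hsum1 : ∑ j : Fin (m+1), ((myres j F₁).card : ℝ) = ((m + 1 - r) * F₁.card : ℕ) := by
    simp_rw [myres_card]
    rw [← Nat.cast_sum, sum_filter_notmem F₁ r h₁]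
  have hsum2 : ∑ j : Fin (m+1), ((myres j F₂).card : ℝ)
      = ((m + 1 - (r-1)) * F₂.card : ℕ) := by
    simp_rw [myres_card]
    rw [← Nat.cast_sum, sum_filter_notmem F₂ (r-1) h₂]
  have key1 : (((m + 1 - r) * F₁.card : ℕ) : ℝ) / (m.choose r : ℝ)
      = (m + 1 : ℝ) * ((F₁.card : ℝ) / ((m+1).choose r : ℝ)) := by
    have hid : (((m+1) * m.choose r : ℕ) : ℝ) = (((m + 1 - r) * (m+1).choose r : ℕ) : ℝ) := by
      exact_mod_cast congrArg (Nat.cast (R := ℝ)) (choose_id r hrm)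
    push_cast at hid ⊢
    field_simp
    nlinarith [hid, sq_nonneg (F₁.card : ℝ)]
  have key2 : (((m + 1 - (r-1)) * F₂.card : ℕ) : ℝ) / (m.choose (r-1) : ℝ)
      = (m + 1 : ℝ) * ((F₂.card : ℝ) / ((m+1).choose (r-1) : ℝ)) := by
    have hid : (((m+1) * m.choose (r-1) : ℕ) : ℝ)
        = (((m + 1 - (r-1)) * (m+1).choose (r-1) : ℕ) : ℝ) := by
      exact_mod_cast congrArg (Nat.cast (R := ℝ)) (choose_id (r-1) hrm')
    push_cast at hid ⊢
    field_simp
    nlinarith [hid, sq_nonneg (F₂.card : ℝ)]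
  have hsumd : ∑ j : Fin (m+1), d j = (m + 1 : ℝ) * x := by
    simp only [hd]
    rw [Finset.sum_add_distrib, ← Finset.sum_div, ← Finset.sum_div, hsum1, hsum2,
      key1, key2, hxdef]
    ring
  -- find a good coordinate j
  have hexj : ∃ j : Fin (m+1), x ≤ d j := by
    by_contra hcon
    push_neg at hcon
    have : ∑ j : Fin (m+1), d j < ∑ j : Fin (m+1), x :=
      Finset.sum_lt_sum_of_nonempty Finset.univ_nonempty (fun j _ => hcon j)
    rw [hsumd, Finset.sum_const, Finset.card_univ, Fintype.card_fin, nsmul_eq_mul] at this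
    push_cast at this
    linarith
  obtain ⟨j, hj⟩ := hexj
  refine le_trans hj (le_csSup hbdd ?_)
  refine ⟨myres j F₁, myres j F₂, ?_, ?_, ?_, rfl⟩
  · intro B hB
    have := h₁ _ (mem_myres.1 hB)
    rwa [Finset.card_map] at this
  · intro B hB
    have := h₂ _ (mem_myres.1 hB)
    rwa [Finset.card_map] at this
  · intro h
    rw [← myres_union] at h
    exact hnc (contains_of_myres h)
end

section
/- For n ≥ r ≥ 1, let l(n,6,r) denote the maximum of |F_1|/C(n,r) + |F_2|/C(n,r−1) over all families F_1 of r-element subsets of [n] and F_2 of (r−1)-element subsets of [n] such that F_1 ∪ F_2 does not contain a copy of the layers i and i−1 of a Q_6 for any 2 ≤ i ≤ 5. Then l(n+1,6,r+1) ≤ l(n,6,r) for all n ≥ r ≥ 1. -/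
open Finset

section ContainsQ6Layers

variable {α β : Type*} [DecidableEq α] [DecidableEq β] {r : ℕ}

theorem not_containsQ6Layers_empty : ¬ContainsQ6Layers r (∅ : Finset (Finset α)) := by
  rintro ⟨i, -, hi, X, Y, hX, -, -, hlower, -⟩
  obtain ⟨A, hAX, hA⟩ := exists_subset_card_eq (s := X) (n := i - 1) (by omega)
  simpa using hlower A hAX hA

theorem ContainsQ6Layers.mono {F G : Finset (Finset α)} (h : ContainsQ6Layers r F)
    (hFG : F ⊆ G) : ContainsQ6Layers r G := by
  obtain ⟨i, hi₂, hi₅, X, Y, hX, hXY, hY, hlower, hupper⟩ := h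
  exact ⟨i, hi₂, hi₅, X, Y, hX, hXY, hY, fun A hA hc => hFG (hlower A hA hc),
    fun A hA hc => hFG (hupper A hA hc)⟩

theorem ContainsQ6Layers.map_insert (e : β ↪ α) {z : α} (hz : z ∉ Set.range e)
    {G : Finset (Finset β)} (h : ContainsQ6Layers r G) :
    ContainsQ6Layers (r + 1) (G.image fun B => insert z (B.map e)) := by
  obtain ⟨i, hi₂, hi₅, X, Y, hX, hXY, hY, hlower, hupper⟩ := h
  have hzX : ∀ S : Finset β, z ∉ S.map e := fun S hS => hz (by
    obtain ⟨b, -, rfl⟩ := mem_map.1 hS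
    exact ⟨b, rfl⟩)
  have lift : ∀ k, (∀ A ⊆ X, A.card = k → Y ∪ A ∈ G) →
      ∀ A' ⊆ X.map e, A'.card = k → insert z (Y.map e) ∪ A' ∈
        G.image fun B => insert z (B.map e) := by
    intro k hk A' hA' hcard
    obtain ⟨A, hAX, rfl⟩ := subset_map_iff.1 hA'
    exact mem_image.2 ⟨Y ∪ A, hk A hAX (by simpa using hcard), by rw [map_union, insert_union]⟩
  -- `z` joins the fixed part `Y` of the copy
  refine ⟨i, hi₂, hi₅, X.map e, insert z (Y.map e), by simpa, ?_, ?_, lift _ hlower,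
    lift _ hupper⟩
  · exact disjoint_insert_right.2 ⟨hzX X, (disjoint_map e).2 hXY⟩
  · rw [card_insert_of_notMem (hzX Y), card_map]
    omega

end ContainsQ6Layers

section Link

variable {n : ℕ}

/-- The link of `z` in `F`: the sets of `F` through `z`, with `z` removed and the remaining
points relabelled along `z.succAbove : Fin n → Fin (n + 1)`. -/
noncomputable def link (z : Fin (n + 1)) (F : Finset (Finset (Fin (n + 1)))) :
    Finset (Finset (Fin n)) :=
  {A ∈ F | z ∈ A}.image fun A => A.preimage z.succAbove z.succAboveEmb.injective.injOn

theorem insert_map_preimage_succAbove {z : Fin (n + 1)} {A : Finset (Fin (n + 1))}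
    (hz : z ∈ A) :
    insert z ((A.preimage z.succAbove z.succAboveEmb.injective.injOn).map z.succAboveEmb) = A := by
  ext x
  by_cases hx : x = z
  · simp [hx, hz]
  · obtain ⟨y, rfl⟩ := Fin.exists_succAbove_eq hx
    simpa [hx] using Finset.mem_preimage

theorem card_preimage_succAbove {z : Fin (n + 1)} {A : Finset (Fin (n + 1))} (hz : z ∈ A) :
    (A.preimage z.succAbove z.succAboveEmb.injective.injOn).card = A.card - 1 := by
  conv_rhs => rw [← insert_map_preimage_succAbove hz]
  rw [card_insert_of_notMem (by simp), card_map, Nat.add_sub_cancel]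

theorem card_link (z : Fin (n + 1)) (F : Finset (Finset (Fin (n + 1)))) :
    (link z F).card = #{A ∈ F | z ∈ A} := by
  refine card_image_of_injOn fun A hA B hB hAB => ?_
  simp only [coe_filter, Set.mem_ofPred_eq] at hA hB
  rw [← insert_map_preimage_succAbove hA.2, ← insert_map_preimage_succAbove hB.2]
  exact congrArg (fun C => insert z (C.map z.succAboveEmb)) hAB

theorem card_of_mem_link {z : Fin (n + 1)} {F : Finset (Finset (Fin (n + 1)))} {k : ℕ}
    (hF : ∀ A ∈ F, A.card = k + 1) : ∀ B ∈ link z F, B.card = k := by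
  simp only [link, mem_image, mem_filter]
  rintro B ⟨A, ⟨hA, hzA⟩, rfl⟩
  rw [card_preimage_succAbove hzA, hF A hA, Nat.add_sub_cancel]

theorem link_union (z : Fin (n + 1)) (F G : Finset (Finset (Fin (n + 1)))) :
    link z (F ∪ G) = link z F ∪ link z G := by
  simp only [link, filter_union, image_union]

theorem image_link (z : Fin (n + 1)) (F : Finset (Finset (Fin (n + 1)))) :
    (link z F).image (fun B => insert z (B.map z.succAboveEmb)) = {A ∈ F | z ∈ A} := by
  rw [link, image_image]
  exact (image_congr fun A hA => insert_map_preimage_succAbove (mem_filter.1 hA).2).trans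
    image_id'

theorem not_containsQ6Layers_link {r : ℕ} (z : Fin (n + 1)) {F : Finset (Finset (Fin (n + 1)))}
    (hF : ¬ContainsQ6Layers (r + 1) F) : ¬ContainsQ6Layers r (link z F) := fun h =>
  hF <| (h.map_insert z.succAboveEmb (by simp)).mono (image_link z F ▸ filter_subset _ _)

theorem sum_card_link (F : Finset (Finset (Fin (n + 1)))) :
    ∑ z, (link z F).card = ∑ A ∈ F, A.card := by
  simp only [card_link, card_filter]
  rw [sum_comm]
  simp

end Link

theorem add_one_div_choose (n k : ℕ) :
    ((k : ℝ) + 1) / n.choose k = ((n : ℝ) + 1) / (n + 1).choose (k + 1) := by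
  rcases lt_or_ge n k with hnk | hkn
  · rw [Nat.choose_eq_zero_of_lt hnk, Nat.choose_eq_zero_of_lt (by omega)]
    simp
  · have hpos := Nat.choose_pos hkn
    have hpos' := Nat.choose_pos (Nat.succ_le_succ hkn)
    rw [div_eq_div_iff (by positivity) (by positivity), mul_comm]
    exact_mod_cast (Nat.add_one_mul_choose_eq n k).symm

theorem sum_card_link_div_choose {n k : ℕ} {F : Finset (Finset (Fin (n + 1)))}
    (hF : ∀ A ∈ F, A.card = k + 1) :
    ∑ z, ((link z F).card : ℝ) / n.choose k =
      (n + 1) * ((F.card : ℝ) / (n + 1).choose (k + 1)) := by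
  have hsum : ∑ z, (link z F).card = (k + 1) * F.card := by
    rw [sum_card_link, sum_congr rfl hF, sum_const, smul_eq_mul, mul_comm]
  rw [← sum_div, ← Nat.cast_sum, hsum]
  push_cast
  rw [mul_div_right_comm, add_one_div_choose]
  ring

theorem card_div_choose_le_one {n k : ℕ} {F : Finset (Finset (Fin n))}
    (hF : ∀ A ∈ F, A.card = k) : (F.card : ℝ) / n.choose k ≤ 1 := by
  have hsub : F ⊆ powersetCard k univ := fun A hA => mem_powersetCard.2 ⟨subset_univ A, hF A hA⟩
  refine div_le_one_of_le₀ ?_ (by positivity)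
  simpa using (card_le_card hsub : F.card ≤ _)

def admissibleDensitySums (n r : ℕ) : Set ℝ :=
  {x : ℝ | ∃ F₁ F₂ : Finset (Finset (Fin n)),
    (∀ A ∈ F₁, A.card = r) ∧ (∀ A ∈ F₂, A.card = r - 1) ∧
    ¬ ContainsQ6Layers r (F₁ ∪ F₂) ∧
    x = (F₁.card : ℝ) / (n.choose r : ℝ) + (F₂.card : ℝ) / (n.choose (r - 1) : ℝ)}

theorem bddAbove_admissibleDensitySums (n r : ℕ) : BddAbove (admissibleDensitySums n r) := by
  refine ⟨2, ?_⟩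
  rintro x ⟨F₁, F₂, hF₁, hF₂, -, rfl⟩
  linarith [card_div_choose_le_one hF₁, card_div_choose_le_one hF₂]

theorem le_lval {n r : ℕ} {F₁ F₂ : Finset (Finset (Fin n))} (hF₁ : ∀ A ∈ F₁, A.card = r)
    (hF₂ : ∀ A ∈ F₂, A.card = r - 1) (hF : ¬ContainsQ6Layers r (F₁ ∪ F₂)) :
    (F₁.card : ℝ) / n.choose r + (F₂.card : ℝ) / n.choose (r - 1) ≤ lval n r :=
  le_csSup (bddAbove_admissibleDensitySums n r) ⟨F₁, F₂, hF₁, hF₂, hF, rfl⟩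

theorem lval_monotone_uniformity_general (r n : ℕ) (hr : 1 ≤ r) :
    lval (n + 1) (r + 1) ≤ lval n r := by
  obtain ⟨k, rfl⟩ := Nat.exists_eq_add_of_le' hr
  refine csSup_le
    ⟨0, ∅, ∅, by simp, by simp, by simpa using not_containsQ6Layers_empty, by simp⟩ ?_
  rintro x ⟨F₁, F₂, hF₁, hF₂, hF, rfl⟩
  rw [Nat.add_sub_cancel] at hF₂ ⊢
  have hlink : ∀ z, ((link z F₁).card : ℝ) / n.choose (k + 1) +
      ((link z F₂).card : ℝ) / n.choose k ≤ lval n (k + 1) := fun z =>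
    le_lval (card_of_mem_link hF₁) (card_of_mem_link hF₂)
      (link_union z F₁ F₂ ▸ not_containsQ6Layers_link z hF)
  rw [← mul_le_mul_iff_right₀ n.cast_add_one_pos]
  calc ((n : ℝ) + 1) * ((F₁.card : ℝ) / (n + 1).choose (k + 1 + 1) +
        (F₂.card : ℝ) / (n + 1).choose (k + 1))
      = ∑ z, (((link z F₁).card : ℝ) / n.choose (k + 1) +
          ((link z F₂).card : ℝ) / n.choose k) := by
        rw [sum_add_distrib, sum_card_link_div_choose hF₁, sum_card_link_div_choose hF₂, mul_add]
    _ ≤ ∑ _z : Fin (n + 1), lval n (k + 1) := sum_le_sum fun z _ => hlink z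
    _ = (n + 1) * lval n (k + 1) := by simp

/-- `l(n+1,6,r+1) ≤ l(n,6,r)` for all `n ≥ r ≥ 1`. -/
theorem lval_monotone_uniformity (r n : ℕ) (hr : 1 ≤ r) (hn : r ≤ n) :
    lval (n + 1) (r + 1) ≤ lval n r :=
  lval_monotone_uniformity_general r n hr
end

section
/- Let N, m, r, t be positive integers with t ≥ 4, let [mN] be partitioned into N classes C_1, …, C_N, each of size m, and let F be a family of r-element subsets of [N] that is both D_r(2,t)-free and D_r(t−2,t)-free. Let G be the family of all r-element subsets {x_1,…,x_r} of [mN] such that the x_i lie in pairwise distinct classes C_{j_1}, …, C_{j_r} and {j_1,…,j_r} ∈ F. Then G is both D_r(2,t)-free and D_r(t−2,t)-free. -/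
/-- Blow-up preserves daisy-freeness: if `[mN]` is partitioned into `N` classes `C_1,…,C_N`
of size `m`, `F` is a `D_r(2,t)`-free and `D_r(t-2,t)`-free family of `r`-subsets of `[N]`,
and `G` consists of all `r`-subsets of `[mN]` whose points lie in pairwise distinct classes
whose index set belongs to `F`, then `G` is also `D_r(2,t)`-free and `D_r(t-2,t)`-free. -/
theorem blowup_daisy_free (N m r t : ℕ) (hN : 0 < N) (hm : 0 < m) (hr : 0 < r) (ht : 4 ≤ t)
    (C : Fin N → Finset (Fin (m * N)))
    (hCcard : ∀ j, (C j).card = m)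
    (hCdisj : ∀ j k, j ≠ k → Disjoint (C j) (C k))
    (hCcover : ∀ x, ∃ j, x ∈ C j)
    (F : Finset (Finset (Fin N)))
    (hFunif : ∀ A ∈ F, A.card = r)
    (hF2 : IsDaisyFree r 2 t F) (hFt : IsDaisyFree r (t - 2) t F)
    (G : Finset (Finset (Fin (m * N))))
    (hG : ∀ A : Finset (Fin (m * N)),
      A ∈ G ↔ A.card = r ∧ ∃ J ∈ F,
        (∀ j ∈ J, (A ∩ C j).card = 1) ∧ ∀ x ∈ A, ∃ j ∈ J, x ∈ C j) :
    IsDaisyFree r 2 t G ∧ IsDaisyFree r (t - 2) t G := by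
  classical
  -- the projection to class indices
  set π : Fin (m * N) → Fin N := fun x => (hCcover x).choose with hπdef
  have hπ : ∀ x, x ∈ C (π x) := fun x => (hCcover x).choose_spec
  have hπu : ∀ x j, x ∈ C j → π x = j := by
    intro x j hxj
    by_contra hne
    have := (hCdisj _ _ hne).le_bot (Finset.mem_inter.2 ⟨hπ x, hxj⟩)
    simp at this
  -- key properties of members of G
  have memG : ∀ A ∈ G, Set.InjOn π ↑A ∧ A.image π ∈ F := by
    intro A hA
    obtain ⟨hcard, J, hJF, h1, h2⟩ := (hG A).1 hA
    have hinj : Set.InjOn π ↑A := by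
      intro x hx y hy hxy
      simp only [Finset.coe_mem, Finset.mem_coe] at hx hy
      obtain ⟨j, hjJ, hxj⟩ := h2 x hx
      obtain ⟨j', hjJ', hyj⟩ := h2 y hy
      have hx' := hπu x j hxj
      have hy' := hπu y j' hyj
      have : j = j' := by rw [← hx', ← hy', hxy]
      subst this
      obtain ⟨a, ha⟩ := Finset.card_eq_one.1 (h1 j hjJ)
      have hxa : x ∈ A ∩ C j := Finset.mem_inter.2 ⟨hx, hxj⟩
      have hya : y ∈ A ∩ C j := Finset.mem_inter.2 ⟨hy, hyj⟩
      rw [ha, Finset.mem_singleton] at hxa hya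
      rw [hxa, hya]
    have hsub : A.image π ⊆ J := by
      intro j hj
      obtain ⟨x, hx, rfl⟩ := Finset.mem_image.1 hj
      obtain ⟨j', hjJ', hxj'⟩ := h2 x hx
      rw [hπu x j' hxj']; exact hjJ'
    have hic : (A.image π).card = A.card := Finset.card_image_of_injOn hinj
    have : A.image π = J := Finset.eq_of_subset_of_card_le hsub
      (by rw [hFunif J hJF, hic, hcard])
    rw [this]; exact ⟨hinj, hJF⟩
  have key : ∀ s : ℕ, 2 ≤ s → s ≤ t → IsDaisyFree r s t F → IsDaisyFree r s t G := by
    intro s hs2 hst hFs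
    rintro ⟨S, T, hScard, hTcard, hST, hmem⟩
    -- π is injective on S ∪ T
    have hinj : Set.InjOn π ↑(S ∪ T) := by
      intro x hx y hy hxy
      by_contra hne
      simp only [Finset.coe_union, Set.mem_union, Finset.mem_coe] at hx hy
      have hB : ({x, y} : Finset (Fin (m * N))) ∩ T ⊆ T := Finset.inter_subset_right
      have hBcard : (({x, y} : Finset (Fin (m * N))) ∩ T).card ≤ s := by
        calc (({x, y} : Finset (Fin (m * N))) ∩ T).card
            ≤ ({x, y} : Finset (Fin (m * N))).card :=
              Finset.card_le_card Finset.inter_subset_left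
          _ ≤ 2 := by simpa using Finset.card_insert_le x {y}
          _ ≤ s := hs2
      obtain ⟨X, hBX, hXT, hXcard⟩ := Finset.exists_subsuperset_card_eq hB hBcard
        (by rw [hTcard]; exact hst)
      have hA : S ∪ X ∈ G := hmem X hXT hXcard
      have hxA : x ∈ S ∪ X := by
        rcases hx with hx | hx
        · exact Finset.mem_union_left _ hx
        · exact Finset.mem_union_right _ (hBX (Finset.mem_inter.2 ⟨by simp, hx⟩))
      have hyA : y ∈ S ∪ X := by
        rcases hy with hy | hy
        · exact Finset.mem_union_left _ hy
        · exact Finset.mem_union_right _ (hBX (Finset.mem_inter.2 ⟨by simp, hy⟩))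
      exact hne ((memG _ hA).1 hxA hyA hxy)
    apply hFs
    refine ⟨S.image π, T.image π, ?_, ?_, ?_, ?_⟩
    · rw [Finset.card_image_of_injOn (hinj.mono (by simp [Finset.coe_subset])), hScard]
    · rw [Finset.card_image_of_injOn (hinj.mono (by simp [Finset.coe_subset])), hTcard]
    · rw [Finset.disjoint_left]
      rintro j hjS hjT
      obtain ⟨x, hx, rfl⟩ := Finset.mem_image.1 hjS
      obtain ⟨y, hy, hyx⟩ := Finset.mem_image.1 hjT
      have : y = x := hinj (by simp [hy]) (by simp [hx]) hyx
      subst this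
      exact Finset.disjoint_left.1 hST hx hy
    · intro X' hX' hX'card
      set X : Finset (Fin (m * N)) := T.filter (fun a => π a ∈ X') with hXdef
      have hXT : X ⊆ T := Finset.filter_subset _ _
      have himg : X.image π = X' := by
        apply Finset.Subset.antisymm
        · intro j hj
          obtain ⟨x, hx, rfl⟩ := Finset.mem_image.1 hj
          exact (Finset.mem_filter.1 hx).2
        · intro j hj
          obtain ⟨y, hy, rfl⟩ := Finset.mem_image.1 (hX' hj)
          exact Finset.mem_image.2 ⟨y, Finset.mem_filter.2 ⟨hy, hj⟩, rfl⟩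
      have hXcard : X.card = s := by
        have hsub : ↑X ⊆ (↑(S ∪ T) : Set (Fin (m * N))) := by
          intro a ha
          simp only [Finset.coe_union, Set.mem_union, Finset.mem_coe] at ha ⊢
          exact Or.inr (hXT ha)
        have := Finset.card_image_of_injOn (hinj.mono hsub)
        rw [himg] at this
        omega
      have hA : S ∪ X ∈ G := hmem X hXT hXcard
      have := (memG _ hA).2
      rwa [Finset.image_union, himg] at this
  exact ⟨key 2 le_rfl (by omega) hF2, key (t - 2) (by omega) (by omega) hFt⟩
end
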